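/- arXiv:1507.07143 — 9 statements merged into one kernel-verified Lean document; each statement's English description precedes it below -/
import Mathlib

section
/- An Abelian group G has the finite matching property if and only if G is torsion-free or G is isomorphic to ℤ/pℤ for some prime p. -/
/-- A matching from `A` to `B` in an additive abelian group is a bijection
`f : A → B` such that `a + f a ∉ A` for all `a ∈ A`. -/
def IsMatching {G : Type*} [AddCommGroup G] (A B : Set G) (f : A → B) : Prop :=
  Function.Bijective f ∧ ∀ a : A, (a : G) + (f a : G) ∉ A

/-- `G` has the finite matching property if for all nonempty finite subsets `A`, `B`
with `#A = #B` and `0 ∉ B` there is a matching from `A` to `B`. -/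
def HasFiniteMatchingProperty (G : Type*) [AddCommGroup G] : Prop :=
  ∀ A B : Set G, A.Finite → B.Finite → A.Nonempty → B.Nonempty →
    A.ncard = B.ncard → (0 : G) ∉ B → ∃ f : A → B, IsMatching A B f

/-!
By Hall's theorem, a matching from `A` to `B` exists as soon as `#S + #T ≤ #A` whenever
`∅ ≠ S ⊆ A`, `T ⊆ B` and `S + T ⊆ A`. Then `S + ({0} ∪ T) ⊆ A`, and the Cauchy–Davenport
inequality `min (minOrder G) (#S + #T) ≤ #(S + ({0} ∪ T))`, where `minOrder G` is the least
order of a nonzero element, gives the bound provided `#A < minOrder G`. This holds for every `A`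
in a torsion-free group (`minOrder G = ∞`) and in a group of prime order `p` (`#A = #B ≤ p - 1`).

Conversely, if `H` is a finite nontrivial subgroup and `x ∉ H`, there is no matching from `H` to
`(H \ {0}) ∪ {x}`: every `a ∈ H` would have to be sent to `x`. So a group with a nonzero torsion
element and the finite matching property is finite and simple, hence cyclic of prime order.
-/

open Finset AddMonoid
open scoped Pointwise

section

variable {G : Type*} [AddCommGroup G]

lemma exists_isMatching_of_card_add_le [DecidableEq G] {A B : Finset G} (hAB : #A = #B)
    (h : ∀ S T : Finset G, S ⊆ A → S.Nonempty → T ⊆ B → S + T ⊆ A → #S + #T ≤ #A) :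
    ∃ f : (↑A : Set G) → (↑B : Set G), IsMatching (A : Set G) B f := by
  let t : (↑A : Set G) → Finset G := fun a ↦ B.filter fun b ↦ (a : G) + b ∉ A
  have hall : ∀ s : Finset (↑A : Set G), #s ≤ #(s.biUnion t) := by
    intro s
    rcases s.eq_empty_or_nonempty with rfl | hs
    · simp
    set S := s.map (Function.Embedding.subtype _)
    set T := B.filter fun b ↦ ∀ a ∈ S, a + b ∈ A
    have hunion : s.biUnion t = B \ T := by
      ext b
      simp only [t, T, S, mem_biUnion, mem_sdiff, mem_filter, mem_map,
        Function.Embedding.coe_subtype]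
      grind
    have hST : S + T ⊆ A := by
      intro x hx
      obtain ⟨a, ha, b, hb, rfl⟩ := mem_add.1 hx
      exact (mem_filter.1 hb).2 a ha
    have hSA : S ⊆ A := by
      intro x hx
      obtain ⟨a, -, rfl⟩ := mem_map.1 hx
      exact a.2
    have hTB : T ⊆ B := filter_subset _ _
    have key := h S T hSA hs.map hTB hST
    calc #s = #S := (card_map _).symm
      _ ≤ #B - #T := by omega
      _ = #(s.biUnion t) := by rw [hunion, card_sdiff_of_subset hTB]
  obtain ⟨f, hf, hft⟩ := (all_card_le_biUnion_card_iff_exists_injective t).1 hall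
  have hfB (a : (↑A : Set G)) : f a ∈ B ∧ (a : G) + f a ∉ A := mem_filter.1 (hft a)
  let g : (↑A : Set G) → (↑B : Set G) := fun a ↦ ⟨f a, (hfB a).1⟩
  have hg : Function.Injective g := fun a a' h ↦ hf (congrArg Subtype.val h)
  refine ⟨g, hg.bijective_of_nat_card_le ?_, fun a ↦ (hfB a).2⟩
  simp [hAB]

lemma card_add_card_le_of_lt_minOrder [DecidableEq G] {S T U : Finset G} (hS : S.Nonempty)
    (h0T : (0 : G) ∉ T) (hSU : S ⊆ U) (hSTU : S + T ⊆ U) (hU : (#U : ℕ∞) < minOrder G) :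
    #S + #T ≤ #U := by
  have hsub : S + insert 0 T ⊆ U := by
    intro x hx
    obtain ⟨a, ha, b, hb, rfl⟩ := mem_add.1 hx
    rcases mem_insert.1 hb with rfl | hb
    · simpa using hSU ha
    · exact hSTU (add_mem_add ha hb)
  have hCD := cauchy_davenport_minOrder_add hS (insert_nonempty 0 T)
  rw [card_insert_of_notMem h0T, Nat.add_succ_sub_one] at hCD
  have := hCD.trans (Nat.cast_le.2 (card_le_card hsub))
  rcases min_le_iff.1 this with h | h
  · exact absurd (h.trans_lt hU) (lt_irrefl _)
  · exact_mod_cast h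

lemma hasFiniteMatchingProperty_of_forall_card_lt_minOrder
    (h : ∀ B : Finset G, (0 : G) ∉ B → (#B : ℕ∞) < minOrder G) :
    HasFiniteMatchingProperty G := by
  classical
  intro A B hA hB _ _ hAB h0B
  obtain ⟨A, rfl⟩ := hA.exists_finset_coe
  obtain ⟨B, rfl⟩ := hB.exists_finset_coe
  rw [Set.ncard_coe_finset, Set.ncard_coe_finset] at hAB
  have hA : (#A : ℕ∞) < minOrder G := hAB ▸ h B h0B
  exact exists_isMatching_of_card_add_le hAB fun S T hSA hS hTB hSTA ↦
    card_add_card_le_of_lt_minOrder hS (fun h0 ↦ h0B (hTB h0)) hSA hSTA hA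

lemma hasFiniteMatchingProperty_of_isAddTorsionFree [IsAddTorsionFree G] :
    HasFiniteMatchingProperty G :=
  hasFiniteMatchingProperty_of_forall_card_lt_minOrder fun B _ ↦ by
    simp [minOrder_eq_top]

lemma natCard_le_minOrder_of_natCard_prime (hp : (Nat.card G).Prime) :
    (Nat.card G : ℕ∞) ≤ minOrder G :=
  le_minOrder.2 fun a ha _ ↦ by
    rcases hp.eq_one_or_self_of_dvd _ (addOrderOf_dvd_natCard a) with h | h
    · exact absurd (addOrderOf_eq_one_iff.1 h) ha
    · rw [h]

lemma hasFiniteMatchingProperty_of_natCard_prime (hp : (Nat.card G).Prime) :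
    HasFiniteMatchingProperty G := by
  have : Finite G := Nat.finite_of_card_ne_zero hp.ne_zero
  refine hasFiniteMatchingProperty_of_forall_card_lt_minOrder fun B h0B ↦ ?_
  have hB : (B : Set G) ≠ Set.univ := fun h ↦ h0B (by simp [← mem_coe, h])
  calc (#B : ℕ∞) < Nat.card G := by exact_mod_cast Set.ncard_coe_finset B ▸ Set.ncard_lt_card hB
    _ ≤ minOrder G := natCard_le_minOrder_of_natCard_prime hp

namespace HasFiniteMatchingProperty

lemma eq_top_of_ne_bot (h : HasFiniteMatchingProperty G) {H : AddSubgroup G}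
    (hH : (H : Set G).Finite) (hbot : H ≠ ⊥) : H = ⊤ := by
  by_contra htop
  obtain ⟨x, hx⟩ : ∃ x, x ∉ H := not_forall.1 fun h' ↦ htop ((AddSubgroup.eq_top_iff' H).2 h')
  obtain ⟨y, hyH, hy0⟩ := H.bot_or_exists_ne_zero.resolve_left hbot
  have hx0 : x ≠ 0 := fun h0 ↦ hx (h0 ▸ H.zero_mem)
  have hcard : (H : Set G).ncard = (insert x ((H : Set G) \ {0})).ncard := by
    have := (Set.ncard_pos hH).2 ⟨0, H.zero_mem⟩
    rw [Set.ncard_insert_of_notMem (fun hm ↦ hx hm.1) hH.sdiff,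
      Set.ncard_sdiff_singleton_of_mem H.zero_mem]
    omega
  have h0 : (0 : G) ∉ insert x ((H : Set G) \ {0}) := by
    rintro (h0 | ⟨-, h0⟩)
    · exact hx0 h0.symm
    · exact h0 rfl
  obtain ⟨f, ⟨hf, -⟩, hfH⟩ := h _ _ hH (hH.sdiff.insert x) ⟨0, H.zero_mem⟩
    (Set.insert_nonempty _ _) hcard h0
  have hfx (a : (H : Set G)) : (f a : G) = x := by
    rcases (f a).2 with hfa | hfa
    · exact hfa
    · exact absurd (H.add_mem a.2 hfa.1) (hfH a)
  have := @hf ⟨0, H.zero_mem⟩ ⟨y, hyH⟩ (Subtype.ext ((hfx _).trans (hfx _).symm))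
  exact hy0 (congrArg Subtype.val this).symm

lemma isSimpleAddGroup (h : HasFiniteMatchingProperty G) {g : G} (hg : g ≠ 0)
    (hfin : IsOfFinAddOrder g) : IsSimpleAddGroup G := by
  have htop := h.eq_top_of_ne_bot hfin.finite_zmultiples (AddSubgroup.zmultiples_ne_bot.2 hg)
  have : Finite G :=
    Set.finite_univ_iff.1 (AddSubgroup.coe_top (G := G) ▸ htop ▸ hfin.finite_zmultiples)
  exact { exists_pair_ne := ⟨g, 0, hg⟩
          eq_bot_or_eq_top_of_normal := fun H _ ↦
            or_iff_not_imp_left.2 (h.eq_top_of_ne_bot (Set.toFinite _)) }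

end HasFiniteMatchingProperty

end

/-- An abelian group has the finite matching property iff it is torsion-free
or cyclic of prime order. -/
theorem stmt0 (G : Type*) [AddCommGroup G] :
    HasFiniteMatchingProperty G ↔
      ((∀ (g : G) (n : ℕ), 0 < n → n • g = 0 → g = 0) ∨
        ∃ p : ℕ, p.Prime ∧ Nonempty (G ≃+ ZMod p)) := by
  constructor
  · intro h
    by_cases htf : ∀ (g : G) (n : ℕ), 0 < n → n • g = 0 → g = 0
    · exact Or.inl htf
    push Not at htf
    obtain ⟨g, n, hn, hng, hg⟩ := htf
    have := h.isSimpleAddGroup hg (isOfFinAddOrder_iff_nsmul_eq_zero.2 ⟨n, hn, hng⟩)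
    exact Or.inr ⟨_, IsSimpleAddGroup.prime_card, ⟨(zmodAddCyclicAddEquiv inferInstance).symm⟩⟩
  · rintro (htf | ⟨p, hp, ⟨e⟩⟩)
    · have : IsAddTorsionFree G := isAddTorsionFree_iff_not_isOfFinAddOrder.2 fun g hg hfin ↦ by
        obtain ⟨n, hn, hng⟩ := isOfFinAddOrder_iff_nsmul_eq_zero.1 hfin
        exact hg (htf g n hn hng)
      exact hasFiniteMatchingProperty_of_isAddTorsionFree
    · have hcard : Nat.card G = p := (Nat.card_congr e.toEquiv).trans (Nat.card_zmod p)
      exact hasFiniteMatchingProperty_of_natCard_prime (hcard ▸ hp)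
end

section
/- For every prime p > 5, the group ℤ/pℤ fails to have the acyclic matching property at order (p−1)/2; that is, there exist subsets A and B of ℤ/pℤ with #A = #B = (p−1)/2 and two distinct matchings f, g : A → B with m_f = m_g. -/
noncomputable def matchCount {G : Type*} [AddCommGroup G] (A B : Set G) (f : A → B)
    (x : G) : ℕ :=
  Nat.card {a : A // (a : G) + (f a : G) = x}

namespace Stmt2Aux
def Fn (n m : ℕ) : ℕ := if m = 1 then n else if m = 2 then n+1 else if m = 3 then n-1 else n+1-m
def sg (m : ℕ) : ℕ := if m = 1 then 2 else if m = 2 then 3 else if m = 3 then 1 else m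
def sgi (m : ℕ) : ℕ := if m = 1 then 3 else if m = 2 then 1 else if m = 3 then 2 else m

lemma Fn_le {n m : ℕ} (hn : 3 ≤ n) (h : m ≤ n) : Fn n m ≤ 2*n := by unfold Fn; split_ifs <;> omega
lemma Fn_inj {n m1 m2 : ℕ} (hn : 3 ≤ n) (h11 : 1 ≤ m1) (h12 : m1 ≤ n) (h21 : 1 ≤ m2)
    (h22 : m2 ≤ n) (h : Fn n m1 = Fn n m2) : m1 = m2 := by
  unfold Fn at h; split_ifs at h <;> omega
lemma sg_mem {n m : ℕ} (hn : 3 ≤ n) (h1 : 1 ≤ m) (h2 : m ≤ n) : 1 ≤ sg m ∧ sg m ≤ n := by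
  unfold sg; split_ifs <;> omega
lemma sgi_mem {n m : ℕ} (hn : 3 ≤ n) (h1 : 1 ≤ m) (h2 : m ≤ n) : 1 ≤ sgi m ∧ sgi m ≤ n := by
  unfold sgi; split_ifs <;> omega
lemma sg_sgi {m : ℕ} : sg (sgi m) = m := by unfold sg sgi; split_ifs <;> omega
lemma sgi_sg {m : ℕ} : sgi (sg m) = m := by unfold sg sgi; split_ifs <;> omega
lemma sum_f_bounds {n m : ℕ} (hn : 3 ≤ n) (h1 : 1 ≤ m) (h2 : m ≤ n) :
    n+1 ≤ m + Fn n m ∧ m + Fn n m ≤ 2*n := by unfold Fn; split_ifs <;> omega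
lemma sum_g_bounds {n m : ℕ} (hn : 3 ≤ n) (h1 : 1 ≤ m) (h2 : m ≤ n) :
    n+1 ≤ m + Fn n (sg m) ∧ m + Fn n (sg m) ≤ 2*n := by unfold Fn sg; split_ifs <;> omega
lemma key {n m : ℕ} (hn : 3 ≤ n) (h1 : 1 ≤ m) (h2 : m ≤ n) :
    m + Fn n m = sg m + Fn n (sg (sg m)) := by unfold Fn sg; split_ifs <;> omega
end Stmt2Aux

open Stmt2Aux in
/-- For every prime `p > 5`, `ℤ/pℤ` fails to have the acyclic matching property at
order `(p-1)/2`: there are subsets `A`, `B` of cardinality `(p-1)/2` and two distinct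
matchings `f, g : A → B` with `m_f = m_g`. -/
theorem stmt2 (p : ℕ) (hp : p.Prime) (h5 : 5 < p) :
    ∃ (A B : Set (ZMod p)) (f g : A → B),
      A.ncard = (p - 1) / 2 ∧ B.ncard = (p - 1) / 2 ∧
      IsMatching A B f ∧ IsMatching A B g ∧ f ≠ g ∧
      matchCount A B f = matchCount A B g := by
  have h6 : p ≠ 6 := by rintro rfl; norm_num at hp
  have hodd : p % 2 = 1 := (Nat.Prime.eq_two_or_odd hp).resolve_left (by omega)
  set n := (p - 1) / 2 with hn
  have hpn : p = 2*n + 1 := by omega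
  have hn3 : 3 ≤ n := by omega
  haveI : NeZero p := ⟨by omega⟩
  -- basic val lemmas
  have hv : ∀ m : ℕ, m ≤ 2*n → ((m : ZMod p)).val = m := fun m hm =>
    ZMod.val_cast_of_lt (by omega)
  have hvx : ∀ x : ZMod p, ((x.val : ℕ) : ZMod p) = x := fun x => ZMod.natCast_rightInverse x
  -- the sets and maps
  set A : Set (ZMod p) := (Nat.cast : ℕ → ZMod p) '' Set.Icc 1 n with hA
  have memA : ∀ x : ZMod p, x ∈ A ↔ 1 ≤ x.val ∧ x.val ≤ n := by
    intro x
    constructor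
    · rintro ⟨m, hm, rfl⟩
      obtain ⟨h1, h2⟩ := hm
      rw [hv m (by omega)]; exact ⟨h1, h2⟩
    · rintro ⟨h1, h2⟩
      exact ⟨x.val, ⟨h1, h2⟩, hvx x⟩
  set F : ZMod p → ZMod p := fun x => ((Fn n x.val : ℕ) : ZMod p) with hFdef
  set S : ZMod p → ZMod p := fun x => ((sg x.val : ℕ) : ZMod p) with hSdef
  set Si : ZMod p → ZMod p := fun x => ((sgi x.val : ℕ) : ZMod p) with hSidef
  have hFval : ∀ x : ZMod p, x ∈ A → (F x).val = Fn n x.val := by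
    intro x hx
    exact hv _ (Fn_le hn3 ((memA x).1 hx).2)
  have hSval : ∀ x : ZMod p, x ∈ A → (S x).val = sg x.val := by
    intro x hx
    obtain ⟨h1, h2⟩ := (memA x).1 hx
    exact hv _ (by have := (sg_mem hn3 h1 h2).2; omega)
  have hSival : ∀ x : ZMod p, x ∈ A → (Si x).val = sgi x.val := by
    intro x hx
    obtain ⟨h1, h2⟩ := (memA x).1 hx
    exact hv _ (by have := (sgi_mem hn3 h1 h2).2; omega)
  have hSA : ∀ x : ZMod p, x ∈ A → S x ∈ A := by
    intro x hx
    obtain ⟨h1, h2⟩ := (memA x).1 hx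
    rw [memA, hSval x hx]
    exact sg_mem hn3 h1 h2
  have hSiA : ∀ x : ZMod p, x ∈ A → Si x ∈ A := by
    intro x hx
    obtain ⟨h1, h2⟩ := (memA x).1 hx
    rw [memA, hSival x hx]
    exact sgi_mem hn3 h1 h2
  have hSSi : ∀ x : ZMod p, x ∈ A → S (Si x) = x := by
    intro x hx
    have : S (Si x) = ((sg ((Si x).val) : ℕ) : ZMod p) := rfl
    rw [this, hSival x hx, sg_sgi, hvx]
  have hSiS : ∀ x : ZMod p, x ∈ A → Si (S x) = x := by
    intro x hx
    have : Si (S x) = ((sgi ((S x).val) : ℕ) : ZMod p) := rfl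
    rw [this, hSval x hx, sgi_sg, hvx]
  have hcastinj : Set.InjOn (Nat.cast : ℕ → ZMod p) (Set.Icc 1 n) := by
    intro x hx y hy h
    obtain ⟨hx1, hx2⟩ := hx
    obtain ⟨hy1, hy2⟩ := hy
    have : ((x : ZMod p)).val = ((y : ZMod p)).val := by rw [h]
    rwa [hv x (by omega), hv y (by omega)] at this
  -- injectivity of F on A
  have hFinj : Set.InjOn F A := by
    intro x hx y hy h
    obtain ⟨hx1, hx2⟩ := (memA x).1 hx
    obtain ⟨hy1, hy2⟩ := (memA y).1 hy
    have hval : Fn n x.val = Fn n y.val := by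
      rw [← hFval x hx, ← hFval y hy, h]
    have := Fn_inj hn3 hx1 hx2 hy1 hy2 hval
    rw [← hvx x, ← hvx y, this]
  set B : Set (ZMod p) := F '' A with hB
  -- sum identities
  have hsumf : ∀ x : ZMod p, x ∈ A → x + F x = ((x.val + Fn n x.val : ℕ) : ZMod p) := by
    intro x hx
    rw [Nat.cast_add, hvx x]
  have hsumg : ∀ x : ZMod p, x ∈ A →
      x + F (S x) = ((x.val + Fn n (sg x.val) : ℕ) : ZMod p) := by
    intro x hx
    have : F (S x) = ((Fn n ((S x).val) : ℕ) : ZMod p) := rfl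
    rw [this, hSval x hx, Nat.cast_add, hvx x]
  -- the two matchings
  refine ⟨A, B, (fun a => ⟨F a, ⟨a.1, a.2, rfl⟩⟩), (fun a => ⟨F (S a), ⟨S a.1, hSA a.1 a.2, rfl⟩⟩),
    ?_, ?_, ?_, ?_, ?_, ?_⟩
  · -- ncard A
    rw [hA, Set.ncard_image_of_injOn hcastinj, ← Finset.coe_Icc, Set.ncard_coe_finset,
      Nat.card_Icc]
    omega
  · -- ncard B
    rw [hB, Set.ncard_image_of_injOn hFinj, hA, Set.ncard_image_of_injOn hcastinj,
      ← Finset.coe_Icc, Set.ncard_coe_finset, Nat.card_Icc]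
    omega
  · -- IsMatching f
    constructor
    · constructor
      · rintro ⟨x, hx⟩ ⟨y, hy⟩ h
        have : F x = F y := congrArg Subtype.val h
        exact Subtype.ext (hFinj hx hy this)
      · rintro ⟨b, c, hc, rfl⟩
        exact ⟨⟨c, hc⟩, rfl⟩
    · rintro ⟨x, hx⟩ hmem
      obtain ⟨h1, h2⟩ := (memA x).1 hx
      simp only at hmem
      rw [hsumf x hx, memA, hv _ (sum_f_bounds hn3 h1 h2).2] at hmem
      have := (sum_f_bounds hn3 h1 h2).1
      omega
  · -- IsMatching g
    constructor
    · constructor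
      · rintro ⟨x, hx⟩ ⟨y, hy⟩ h
        have h' : F (S x) = F (S y) := congrArg Subtype.val h
        have hS' : S x = S y := hFinj (hSA x hx) (hSA y hy) h'
        have : Si (S x) = Si (S y) := by rw [hS']
        rw [hSiS x hx, hSiS y hy] at this
        exact Subtype.ext this
      · rintro ⟨b, c, hc, rfl⟩
        refine ⟨⟨Si c, hSiA c hc⟩, ?_⟩
        exact Subtype.ext (by simp only; rw [hSSi c hc])
    · rintro ⟨x, hx⟩ hmem
      obtain ⟨h1, h2⟩ := (memA x).1 hx
      simp only at hmem
      rw [hsumg x hx, memA, hv _ (sum_g_bounds hn3 h1 h2).2] at hmem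
      have := (sum_g_bounds hn3 h1 h2).1
      omega
  · -- f ≠ g
    intro hfg
    have h1A : ((1 : ℕ) : ZMod p) ∈ A := by
      rw [memA, hv 1 (by omega)]; omega
    have := congrFun hfg ⟨((1 : ℕ) : ZMod p), h1A⟩
    have hval : (F ((1 : ℕ) : ZMod p)).val = (F (S ((1 : ℕ) : ZMod p))).val :=
      congrArg (fun b : ↥B => (b : ZMod p).val) this
    have e1 : (F ((1 : ℕ) : ZMod p)).val = Fn n (((1:ℕ) : ZMod p)).val := hFval _ h1A
    have e2 : (F (S ((1 : ℕ) : ZMod p))).val = Fn n (sg (((1:ℕ) : ZMod p)).val) := by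
      have : F (S ((1 : ℕ) : ZMod p)) = ((Fn n ((S ((1:ℕ) : ZMod p)).val) : ℕ) : ZMod p) := rfl
      rw [this, hSval _ h1A]
      exact hv _ (Fn_le hn3 (sg_mem hn3 (by rw [hv 1 (by omega)]) (by rw [hv 1 (by omega)]; omega)).2)
    rw [e1, e2, hv 1 (by omega)] at hval
    have : n = n + 1 := by simpa [Fn, sg] using hval
    omega
  · -- matchCount equal
    funext x
    unfold matchCount
    apply Nat.card_congr
    refine
      { toFun := fun a => ⟨⟨S a.1.1, hSA a.1.1 a.1.2⟩, ?_⟩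
        invFun := fun b => ⟨⟨Si b.1.1, hSiA b.1.1 b.1.2⟩, ?_⟩
        left_inv := ?_
        right_inv := ?_ }
    · -- S a satisfies g-condition
      obtain ⟨⟨a, ha⟩, hsum⟩ := a
      simp only at hsum ⊢
      obtain ⟨h1, h2⟩ := (memA a).1 ha
      have hkey : a + F a = S a + F (S (S a)) := by
        rw [hsumf a ha, hsumg (S a) (hSA a ha), hSval a ha, key hn3 h1 h2]
      rw [← hkey]
      exact hsum
    · -- Si b satisfies f-condition
      obtain ⟨⟨b, hb⟩, hsum⟩ := b
      simp only at hsum ⊢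
      obtain ⟨h1, h2⟩ := (memA b).1 hb
      have hb' := hSiA b hb
      obtain ⟨h1', h2'⟩ := (memA (Si b)).1 hb'
      have hkey : Si b + F (Si b) = S (Si b) + F (S (S (Si b))) := by
        rw [hsumf (Si b) hb', hsumg (S (Si b)) (hSA _ hb'), hSval (Si b) hb',
          key hn3 h1' h2']
      rw [hkey, hSSi b hb]
      exact hsum
    · rintro ⟨⟨a, ha⟩, hsum⟩
      apply Subtype.ext
      apply Subtype.ext
      simp only
      exact hSiS a ha
    · rintro ⟨⟨b, hb⟩, hsum⟩
      apply Subtype.ext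
      apply Subtype.ext
      simp only
      exact hSSi b hb
end

section
/- For every prime p > 5 and every natural number k with 2 < k < p − 2, the group ℤ/pℤ fails to have the acyclic matching property at order k; that is, there exist subsets A and B of ℤ/pℤ with #A = #B = k and two distinct matchings f, g : A → B with m_f = m_g. -/
namespace Stmt5Aux

/-- the index of `b` matched to index `i` by `f`, as a natural number -/
def nf (k : ℕ) (i : Fin k) : ℕ :=
  if (i : ℕ) = 0 then k else if (i : ℕ) = 1 then k + 1
  else if (i : ℕ) = 2 then k - 1 else k - (i : ℕ)

/-- the sum `a_i + f(a_i)` as a natural number -/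
def mS (k : ℕ) (i : Fin k) : ℕ :=
  if (i : ℕ) = 0 then k else if (i : ℕ) = 1 then k + 2
  else if (i : ℕ) = 2 then k + 1 else k

/-- the sum `a_i + g(a_i)` as a natural number -/
def mg (k : ℕ) (i : Fin k) : ℕ :=
  if (i : ℕ) = 0 then k + 1 else if (i : ℕ) = 1 then k
  else if (i : ℕ) = 2 then k + 2 else k

def iota (p k : ℕ) (i : Fin k) : ZMod p := ((i : ℕ) : ZMod p)

def bf (p k : ℕ) (i : Fin k) : ZMod p := ((nf k i : ℕ) : ZMod p)

/-- the 3-cycle 0 ↦ 1 ↦ 2 ↦ 0 on `Fin k` -/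
def c3 (k : ℕ) (hk : 2 < k) : Fin k ≃ Fin k :=
  (Equiv.swap ⟨1, by omega⟩ ⟨2, hk⟩).trans (Equiv.swap ⟨0, by omega⟩ ⟨1, by omega⟩)

lemma c3_zero (k : ℕ) (hk : 2 < k) : c3 k hk ⟨0, by omega⟩ = ⟨1, by omega⟩ := by
  simp [c3, Equiv.swap_apply_of_ne_of_ne, Fin.ext_iff]

lemma c3_one (k : ℕ) (hk : 2 < k) : c3 k hk ⟨1, by omega⟩ = ⟨2, hk⟩ := by
  simp [c3, Equiv.swap_apply_of_ne_of_ne, Fin.ext_iff]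

lemma c3_two (k : ℕ) (hk : 2 < k) : c3 k hk ⟨2, hk⟩ = ⟨0, by omega⟩ := by
  simp [c3, Equiv.swap_apply_of_ne_of_ne, Fin.ext_iff]

lemma c3_other (k : ℕ) (hk : 2 < k) (i : Fin k) (hi : 2 < (i : ℕ)) : c3 k hk i = i := by
  have h1 : i ≠ ⟨1, by omega⟩ := by simp [Fin.ext_iff]; omega
  have h2 : i ≠ ⟨2, hk⟩ := by simp [Fin.ext_iff]; omega
  have h0 : i ≠ ⟨0, by omega⟩ := by simp [Fin.ext_iff]; omega
  simp [c3, Equiv.swap_apply_of_ne_of_ne, h0, h1, h2]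

end Stmt5Aux

open Stmt5Aux in
/-- For every prime `p > 5` and every `k` with `2 < k < p - 2`, `ℤ/pℤ` fails to have
the acyclic matching property at order `k`: there are subsets `A`, `B` of cardinality
`k` and two distinct matchings `f, g : A → B` with `m_f = m_g`. -/
theorem stmt5 (p : ℕ) (hp : p.Prime) (h5 : 5 < p) (k : ℕ) (hk2 : 2 < k) (hkp : k < p - 2) :
    ∃ (A B : Set (ZMod p)) (f g : A → B),
      A.ncard = k ∧ B.ncard = k ∧
      IsMatching A B f ∧ IsMatching A B g ∧ f ≠ g ∧
      matchCount A B f = matchCount A B g := by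
  haveI : NeZero p := ⟨hp.pos.ne'⟩
  have hk2p : k + 2 < p := by omega
  have hcast : ∀ a b : ℕ, a < p → b < p → ((a : ZMod p) = (b : ZMod p)) → a = b := by
    intro a b ha hb h
    have := congrArg ZMod.val h
    rwa [ZMod.val_cast_of_lt ha, ZMod.val_cast_of_lt hb] at this
  -- injectivity of iota
  have hι : Function.Injective (iota p k) := by
    intro i j h
    have := hcast i j (by omega) (by omega) h
    exact Fin.ext this
  -- bounds on nf
  have hnf_lt : ∀ i : Fin k, nf k i < p := by
    intro i
    have := i.2
    unfold nf
    split_ifs <;> omega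
  -- injectivity of bf
  have hbf : Function.Injective (bf p k) := by
    intro i j h
    have hij := hcast _ _ (hnf_lt i) (hnf_lt j) h
    have hi := i.2; have hj := j.2
    apply Fin.ext
    unfold nf at hij
    split_ifs at hij <;> omega
  -- index equivalences
  set A : Set (ZMod p) := Set.range (iota p k) with hA
  set B : Set (ZMod p) := Set.range (bf p k) with hB
  set eA : Fin k ≃ A := Equiv.ofInjective (iota p k) hι with heA
  set eB : Fin k ≃ B := Equiv.ofInjective (bf p k) hbf with heB
  set σ := c3 k hk2 with hσ
  set f : A → B := ⇑(eA.symm.trans eB) with hf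
  set g : A → B := ⇑(eA.symm.trans (σ.trans eB)) with hg
  -- coercion facts
  have hcoeA : ∀ i : Fin k, ((eA i : ZMod p)) = iota p k i := fun i => rfl
  have hcoeB : ∀ i : Fin k, ((eB i : ZMod p)) = bf p k i := fun i => rfl
  have hcoef : ∀ i : Fin k, ((f (eA i) : ZMod p)) = bf p k i := by
    intro i; simp [hf, hcoeB]
  have hcoeg : ∀ i : Fin k, ((g (eA i) : ZMod p)) = bf p k (σ i) := by
    intro i; simp [hg, hcoeB]
  -- sum computations
  have hsumf : ∀ i : Fin k, iota p k i + bf p k i = ((mS k i : ℕ) : ZMod p) := by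
    intro i
    have hi := i.2
    unfold iota bf nf mS
    split_ifs with h0 h1 h2
    · rw [h0]; push_cast; ring
    · rw [h1]; push_cast; ring
    · rw [h2, Nat.cast_sub (by omega)]; push_cast; ring
    · rw [Nat.cast_sub (by omega)]; push_cast; ring
  have hsumg : ∀ i : Fin k, iota p k i + bf p k (σ i) = ((mg k i : ℕ) : ZMod p) := by
    intro i
    have hi := i.2
    rcases Nat.lt_or_ge (i : ℕ) 3 with h3 | h3
    · interval_cases h : (i : ℕ)
      · have hieq : i = ⟨0, by omega⟩ := Fin.ext h
        rw [hieq, hσ, c3_zero k hk2]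
        unfold iota bf nf mg
        norm_num
      · have hieq : i = ⟨1, by omega⟩ := Fin.ext h
        rw [hieq, hσ, c3_one k hk2]
        unfold iota bf nf mg
        norm_num
        rw [Nat.cast_sub (by omega)]; push_cast; ring
      · have hieq : i = ⟨2, hk2⟩ := Fin.ext h
        rw [hieq, hσ, c3_two k hk2]
        unfold iota bf nf mg
        norm_num
        push_cast; ring
    · rw [hσ, c3_other k hk2 i h3]
      unfold iota bf nf mg
      have h0 : ¬ (i : ℕ) = 0 := by omega
      have h1 : ¬ (i : ℕ) = 1 := by omega
      have h2 : ¬ (i : ℕ) = 2 := by omega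
      simp only [h0, h1, h2, if_false]
      rw [Nat.cast_sub (by omega)]; push_cast; ring
  -- bounds on the sums
  have hmS_mem : ∀ i : Fin k, k ≤ mS k i ∧ mS k i ≤ k + 2 := by
    intro i; unfold mS; split_ifs <;> omega
  have hmg_mem : ∀ i : Fin k, k ≤ mg k i ∧ mg k i ≤ k + 2 := by
    intro i; unfold mg; split_ifs <;> omega
  -- sums avoid A
  have hnotinA : ∀ m : ℕ, k ≤ m → m ≤ k + 2 → ((m : ℕ) : ZMod p) ∉ A := by
    rintro m hm1 hm2 ⟨j, hj⟩
    have := hcast j m (by omega) (by omega) hj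
    have := j.2
    omega
  -- the cycle relation between mg and mS
  have hmgS : ∀ i : Fin k, mg k (σ i) = mS k i := by
    intro i
    have hi := i.2
    rcases Nat.lt_or_ge (i : ℕ) 3 with h3 | h3
    · interval_cases h : (i : ℕ)
      · have hieq : i = ⟨0, by omega⟩ := Fin.ext h
        rw [hieq, hσ, c3_zero k hk2]; unfold mg mS; norm_num
      · have hieq : i = ⟨1, by omega⟩ := Fin.ext h
        rw [hieq, hσ, c3_one k hk2]; unfold mg mS; norm_num
      · have hieq : i = ⟨2, hk2⟩ := Fin.ext h
        rw [hieq, hσ, c3_two k hk2]; unfold mg mS; norm_num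
    · rw [hσ, c3_other k hk2 i h3]
      unfold mg mS
      have h0 : ¬ (i : ℕ) = 0 := by omega
      have h1 : ¬ (i : ℕ) = 1 := by omega
      have h2 : ¬ (i : ℕ) = 2 := by omega
      simp only [h0, h1, h2, if_false]
  refine ⟨A, B, f, g, ?_, ?_, ?_, ?_, ?_, ?_⟩
  · rw [← Nat.card_coe_set_eq, Nat.card_congr eA.symm, Nat.card_eq_fintype_card,
      Fintype.card_fin]
  · rw [← Nat.card_coe_set_eq, Nat.card_congr eB.symm, Nat.card_eq_fintype_card,
      Fintype.card_fin]
  · refine ⟨(eA.symm.trans eB).bijective, ?_⟩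
    intro a
    obtain ⟨i, rfl⟩ := eA.surjective a
    rw [hcoeA, hcoef, hsumf]
    exact hnotinA _ (hmS_mem i).1 (hmS_mem i).2
  · refine ⟨(eA.symm.trans (σ.trans eB)).bijective, ?_⟩
    intro a
    obtain ⟨i, rfl⟩ := eA.surjective a
    rw [hcoeA, hcoeg, hsumg]
    exact hnotinA _ (hmg_mem i).1 (hmg_mem i).2
  · intro h
    have h0 := congrFun h (eA ⟨0, by omega⟩)
    have h1 : bf p k ⟨0, by omega⟩ = bf p k (σ ⟨0, by omega⟩) := by
      rw [← hcoef, ← hcoeg, h0]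
    have h2 := hbf h1
    rw [hσ, c3_zero k hk2] at h2
    simp [Fin.ext_iff] at h2
  · funext x
    unfold matchCount
    apply Nat.card_congr
    refine Equiv.subtypeEquiv (eA.symm.trans (σ.trans eA)) ?_
    intro a
    obtain ⟨i, rfl⟩ := eA.surjective a
    have hEq : (eA.symm.trans (σ.trans eA)) (eA i) = eA (σ i) := by simp
    rw [hEq, hcoeA, hcoeA, hcoef, hcoeg, hsumf, hsumg, hmgS]
end

section
/- Let p be a prime and let A be a subset of ℤ/pℤ ∖ {0} with #A = p − 2. If f : A → A is a matching, then f ∘ f is the identity map on A. -/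
/-- Let `p` be prime and `A ⊆ ℤ/pℤ \ {0}` with `#A = p - 2`. Any matching
`f : A → A` satisfies `f ∘ f = id`. -/
theorem stmt6 (p : ℕ) (hp : p.Prime) (A : Set (ZMod p)) (h0 : (0 : ZMod p) ∉ A)
    (hcard : A.ncard = p - 2) (f : A → A) (hf : IsMatching A A f) :
    ∀ a : A, f (f a) = a := by
  classical
  haveI : Fact p.Prime := ⟨hp⟩
  rcases hp.eq_two_or_odd' with rfl | hodd
  · -- p = 2 : A is empty
    have hA : A = ∅ := by
      rw [← Set.ncard_eq_zero (Set.toFinite A)]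
      simpa using hcard
    intro a
    exact absurd a.2 (by simp [hA])
  -- p odd
  haveI : Fintype A := (Set.toFinite A).fintype
  -- complement has two elements 0 and x
  have hAc : Aᶜ.ncard = 2 := by
    have h1 := Set.ncard_add_ncard_compl A (Set.toFinite A) (Set.toFinite _)
    have hcu : Nat.card (ZMod p) = p := by
      rw [Nat.card_eq_fintype_card, ZMod.card]
    have hp2 := hp.two_le
    omega
  obtain ⟨u, v, huv, hst⟩ := Set.ncard_eq_two.mp hAc
  have h0c : (0 : ZMod p) ∈ Aᶜ := h0
  -- wlog u = 0
  obtain ⟨x, hx0, hAcx⟩ : ∃ x : ZMod p, x ≠ 0 ∧ Aᶜ = {0, x} := by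
    rw [hst] at h0c
    rcases h0c with h | h
    · exact ⟨v, fun hv => huv (h ▸ hv ▸ rfl), by rw [hst, ← h]⟩
    · exact ⟨u, fun hu => huv (h ▸ hu ▸ rfl), by rw [hst, ← h, Set.pair_comm]⟩
  -- every a + f a is 0 or x
  have hmem : ∀ a : A, (a : ZMod p) + f a = 0 ∨ (a : ZMod p) + f a = x := by
    intro a
    have := hf.2 a
    have : (a : ZMod p) + f a ∈ Aᶜ := this
    rw [hAcx] at this
    simpa using this
  -- sum of all elements of ZMod p is 0
  have hsum0 : ∑ z : ZMod p, z = 0 := by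
    have h2 : (2 : ZMod p) ≠ 0 := by
      intro h
      have hd : (p : ℕ) ∣ 2 := by
        exact_mod_cast (ZMod.natCast_eq_zero_iff 2 p).mp (by exact_mod_cast h)
      have := (Nat.prime_dvd_prime_iff_eq hp Nat.prime_two).mp hd
      simp [this, Nat.odd_iff] at hodd 
    have hneg : ∑ z : ZMod p, z = ∑ z : ZMod p, -z :=
      Fintype.sum_equiv (Equiv.neg _) _ _ (by intro z; simp)
    have : (2 : ZMod p) * ∑ z : ZMod p, z = 0 := by
      rw [two_mul]
      nth_rewrite 2 [hneg]
      rw [← Finset.sum_add_distrib]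
      simp
    exact (mul_eq_zero.mp this).resolve_left h2
  -- sum over A equals -x
  set A' : Finset (ZMod p) := (Set.toFinite A).toFinset with hA'
  have hsubty : ∀ g : ZMod p → ZMod p, ∑ z ∈ A', g z = ∑ a : A, g a := by
    intro g
    rw [← Finset.sum_subtype A' (fun z => Set.Finite.mem_toFinset _) g]
  have hsplit : Finset.univ = A' ∪ {0, x} := by
    apply Finset.ext
    intro z
    simp only [Finset.mem_univ, Finset.mem_union, Finset.mem_insert, Finset.mem_singleton,
      hA', Set.Finite.mem_toFinset, true_iff]
    by_cases hz : z ∈ A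
    · exact Or.inl hz
    · have : z ∈ Aᶜ := hz
      rw [hAcx] at this
      exact Or.inr this
  have hdisj : Disjoint A' ({0, x} : Finset (ZMod p)) := by
    rw [Finset.disjoint_left]
    intro z hz hz2
    have hzA : z ∈ A := by simpa [hA', Set.Finite.mem_toFinset] using hz
    have : z ∈ Aᶜ := by
      rw [hAcx]
      simpa using hz2
    exact this hzA
  have hsumA : ∑ z ∈ A', z = -x := by
    have h1 : ∑ z : ZMod p, z = ∑ z ∈ A', z + ∑ z ∈ ({0, x} : Finset (ZMod p)), z := by
      rw [hsplit] at hsum0 ⊢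
      exact Finset.sum_union hdisj
    have h2 : ∑ z ∈ ({0, x} : Finset (ZMod p)), z = x := by
      rw [Finset.sum_insert (by simpa using hx0.symm), Finset.sum_singleton, zero_add]
    rw [hsum0, h2] at h1
    linear_combination -h1
  -- the filter set
  set S : Finset A := Finset.univ.filter (fun a : A => (a : ZMod p) + f a = x) with hS
  have hsumf : ∑ a : A, ((f a : ZMod p)) = ∑ a : A, (a : ZMod p) :=
    Fintype.sum_bijective f hf.1 _ _ (fun a => rfl)
  have hT : ∑ a : A, ((a : ZMod p) + f a) = S.card • x := by
    rw [← Finset.sum_filter_add_sum_filter_not Finset.univ (fun a : A => (a : ZMod p) + f a = x)]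
    have hfirst : ∑ a ∈ S, ((a : ZMod p) + f a) = S.card • x := by
      rw [Finset.sum_congr rfl (fun a ha => (Finset.mem_filter.mp ha).2), Finset.sum_const]
    have hsecond : ∑ a ∈ Finset.univ.filter (fun a : A => ¬((a : ZMod p) + f a = x)),
        ((a : ZMod p) + f a) = 0 := by
      apply Finset.sum_eq_zero
      intro a ha
      have hne := (Finset.mem_filter.mp ha).2
      exact (hmem a).resolve_right hne
    rw [hfirst, hsecond, add_zero]
  have hT2 : ∑ a : A, ((a : ZMod p) + f a) = -2 * x := by
    rw [Finset.sum_add_distrib, hsumf, ← hsubty (fun z => z), hsumA]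
    ring
  have hkey : ((S.card : ZMod p) + 2) * x = 0 := by
    rw [hT2] at hT
    rw [nsmul_eq_mul] at hT
    linear_combination -hT
  have hdvd : p ∣ S.card + 2 := by
    have : ((S.card + 2 : ℕ) : ZMod p) = 0 := by
      push_cast
      exact (mul_eq_zero.mp hkey).resolve_right hx0
    exact (ZMod.natCast_eq_zero_iff _ p).mp this
  have hcardA : Fintype.card A = p - 2 := by
    rw [← Nat.card_coe_set_eq A, Nat.card_eq_fintype_card] at hcard
    exact hcard
  have hle : S.card ≤ p - 2 := by
    calc S.card ≤ Fintype.card A := Finset.card_le_univ S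
    _ = p - 2 := hcardA
  have hp2 := hp.two_le
  have hple : p ≤ S.card + 2 := Nat.le_of_dvd (by omega) hdvd
  have hSuniv : S = Finset.univ := Finset.eq_univ_of_card S (by omega)
  have hall : ∀ a : A, (a : ZMod p) + f a = x := by
    intro a
    have : a ∈ S := hSuniv ▸ Finset.mem_univ a
    exact (Finset.mem_filter.mp this).2
  intro a
  apply Subtype.ext
  have h1 := hall a
  have h2 := hall (f a)
  have : (f a : ZMod p) + f (f a) = (f a : ZMod p) + a := by
    rw [h2, ← h1]; ring
  exact add_left_cancel this
end

section
/- Let G be a nontrivial torsion-free Abelian group that is not divisible. Then G fails to have the acyclic matching property at order ∞; that is, there exist infinite subsets A and B of G of the same cardinality and two distinct matchings f, g : A → B with m_f = m_g. -/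
/-- The multiplicity function `m_f` of a matching, valued in cardinals:
`m_f x = #{a ∈ A : a + f a = x}`. -/
noncomputable def matchCountC {G : Type*} [AddCommGroup G] (A B : Set G) (f : A → B)
    (x : G) : Cardinal :=
  Cardinal.mk {a : A // (a : G) + (f a : G) = x}

/-- A nontrivial torsion-free non-divisible abelian group fails to have the acyclic
matching property at order ∞: there are infinite equinumerous subsets `A`, `B` and
two distinct matchings `f, g : A → B` with `m_f = m_g`. -/
theorem stmt8 (G : Type*) [AddCommGroup G] [Nontrivial G]
    (htf : ∀ (g : G) (n : ℕ), 0 < n → n • g = 0 → g = 0)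
    (hnd : ¬ ∀ (g : G) (n : ℕ), 0 < n → ∃ h : G, n • h = g) :
    ∃ (A B : Set G) (f g : A → B), A.Infinite ∧ B.Infinite ∧
      Cardinal.mk A = Cardinal.mk B ∧
      IsMatching A B f ∧ IsMatching A B g ∧ f ≠ g ∧
      matchCountC A B f = matchCountC A B g := by
  obtain ⟨x, hx⟩ := exists_ne (0 : G)
  -- torsion-free over ℤ
  have hz : ∀ z : ℤ, z • x = 0 → z = 0 := by
    intro z hzx
    by_contra h
    have hn : 0 < z.natAbs := Int.natAbs_pos.mpr h
    have h1 : (z.natAbs : ℤ) • x = 0 := by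
      rcases Int.natAbs_eq z with he | he
      · rw [← he, hzx]
      · rw [show ((z.natAbs : ℤ)) = -z by omega, neg_smul, hzx, neg_zero]
    have h2 : z.natAbs • x = 0 := by rwa [natCast_zsmul] at h1
    exact hx (htf x z.natAbs hn h2)
  have hinj : ∀ z w : ℤ, z • x = w • x → z = w := by
    intro z w h
    have h1 : (z - w) • x = 0 := by rw [sub_smul, h, sub_self]
    have := hz _ h1; omega
  set A : Set G := Set.range (fun k : ℤ => (2 * k + 1) • x) with hA
  have memA : ∀ k : ℤ, (2 * k + 1) • x ∈ A := fun k => ⟨k, rfl⟩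
  have evenNot : ∀ z : ℤ, (2 * z) • x ∉ A := by
    rintro z ⟨k, hk⟩
    have := hinj _ _ hk
    omega
  have hshift : ∀ (c : ℤ) (a : G), a ∈ A → a + (2 * c) • x ∈ A := by
    rintro c a ⟨k, rfl⟩
    refine ⟨k + c, ?_⟩
    simp only [← add_smul]
    ring_nf
  have hAinf : A.Infinite := by
    refine Set.infinite_of_injective_forall_mem
      (f := fun k : ℤ => (2 * k + 1) • x) ?_ memA
    intro z w h
    have := hinj _ _ h
    omega
  refine ⟨A, A, fun a => a, fun a => ⟨(a : G) + (2 * 2 : ℤ) • x, hshift 2 a a.2⟩,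
    hAinf, hAinf, rfl, ?_, ?_, ?_, ?_⟩
  · refine ⟨Function.bijective_id, ?_⟩
    rintro ⟨a, k, rfl⟩
    intro h
    simp only at h
    have : ((2 * k + 1) • x + (2 * k + 1) • x) = (2 * (2 * k + 1)) • x := by
      rw [← add_smul]; ring_nf
    rw [this] at h
    exact evenNot _ h
  · constructor
    · constructor
      · intro a b h
        have h' : (a : G) + (2 * 2 : ℤ) • x = (b : G) + (2 * 2 : ℤ) • x :=
          congrArg Subtype.val h
        exact Subtype.ext (by exact add_right_cancel h')
      · rintro ⟨b, hb⟩
        refine ⟨⟨b + (2 * (-1 - 1) : ℤ) • x, hshift _ _ hb⟩, ?_⟩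
        apply Subtype.ext
        show (b + (2 * (-1 - 1) : ℤ) • x) + (2 * 2 : ℤ) • x = b
        rw [add_assoc, ← add_smul]
        norm_num
    · rintro ⟨a, k, rfl⟩
      intro h
      simp only at h
      have he : ((2 * k + 1) • x + ((2 * k + 1) • x + (2 * 2 : ℤ) • x))
          = (2 * (2 * k + 3)) • x := by
        rw [← add_smul, ← add_smul]; ring_nf
      rw [he] at h
      exact evenNot _ h
  · intro h
    have h0 := congrArg Subtype.val (congrFun h ⟨(2 * 0 + 1) • x, memA 0⟩)
    simp only at h0
    have h1 : (2 * 2 : ℤ) • x = 0 := by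
      have := (add_eq_left (a := ((2 * (0:ℤ) + 1) • x : G))).mp h0.symm
      exact this
    have := hz _ h1
    omega
  · funext y
    apply Cardinal.mk_congr
    refine ⟨fun p => ⟨⟨(p.1 : G) + (2 * (-1) : ℤ) • x, hshift _ _ p.1.2⟩, ?_⟩,
      fun p => ⟨⟨(p.1 : G) + (2 * 1 : ℤ) • x, hshift _ _ p.1.2⟩, ?_⟩, ?_, ?_⟩
    · obtain ⟨⟨a, ha⟩, hp⟩ := p
      show (a + (2 * (-1) : ℤ) • x) + ((a + (2 * (-1) : ℤ) • x) + (2 * 2 : ℤ) • x) = y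
      simp only at hp
      rw [← hp]
      have : ((2 * (-1) : ℤ) • x) + ((2 * (-1) : ℤ) • x + (2 * 2 : ℤ) • x) = 0 := by
        rw [← add_smul, ← add_smul]; norm_num
      calc (a + (2 * (-1) : ℤ) • x) + ((a + (2 * (-1) : ℤ) • x) + (2 * 2 : ℤ) • x)
          = (a + a) + (((2 * (-1) : ℤ) • x) + ((2 * (-1) : ℤ) • x + (2 * 2 : ℤ) • x)) := by abel
        _ = a + a := by rw [this, add_zero]
    · obtain ⟨⟨a, ha⟩, hp⟩ := p
      show (a + (2 * 1 : ℤ) • x) + (a + (2 * 1 : ℤ) • x) = y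
      simp only at hp
      rw [← hp]
      have : ((2 * 1 : ℤ) • x) + ((2 * 1 : ℤ) • x) = (2 * 2 : ℤ) • x := by
        rw [← add_smul]; norm_num
      calc (a + (2 * 1 : ℤ) • x) + (a + (2 * 1 : ℤ) • x)
          = (a + (a + (((2 * 1 : ℤ) • x) + ((2 * 1 : ℤ) • x)))) := by abel
        _ = a + (a + (2 * 2 : ℤ) • x) := by rw [this]
    · rintro ⟨⟨a, ha⟩, hp⟩
      apply Subtype.ext; apply Subtype.ext
      show (a + (2 * (-1) : ℤ) • x) + (2 * 1 : ℤ) • x = a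
      rw [add_assoc, ← add_smul]
      norm_num
    · rintro ⟨⟨a, ha⟩, hp⟩
      apply Subtype.ext; apply Subtype.ext
      show (a + (2 * 1 : ℤ) • x) + (2 * (-1) : ℤ) • x = a
      rw [add_assoc, ← add_smul]
      norm_num
end

section
/- Every nontrivial torsion-free Abelian group G fails to have the acyclic matching property at order ∞; that is, there exist infinite subsets A and B of G of the same cardinality and two distinct matchings f, g : A → B with m_f = m_g. -/
private def stmt10F0 (n : ℤ) : ℤ :=
  if n = 1 then -11 else if n = 2 then -10 else if n = 3 then -12 else -n - 20

private def stmt10G0 (n : ℤ) : ℤ :=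
  if n = 1 then -10 else if n = 2 then -12 else if n = 3 then -11 else -n - 20

private def stmt10T (n : ℤ) : ℤ :=
  if n = 1 then 3 else if n = 2 then 1 else if n = 3 then 2 else n

private def stmt10Ti (n : ℤ) : ℤ :=
  if n = 1 then 2 else if n = 2 then 3 else if n = 3 then 1 else n

private lemma stmt10F0_injOn {m n : ℤ} (hm : 1 ≤ m) (hn : 1 ≤ n)
    (h : stmt10F0 m = stmt10F0 n) : m = n := by
  unfold stmt10F0 at h; split_ifs at h <;> omega

private lemma stmt10G0_eq (n : ℤ) : stmt10G0 n = stmt10F0 (stmt10Ti n) := by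
  unfold stmt10G0 stmt10F0 stmt10Ti
  by_cases h1 : n = 1 <;> by_cases h2 : n = 2 <;> by_cases h3 : n = 3 <;>
    simp [h1, h2, h3]

private lemma stmt10_sum (n : ℤ) :
    n + stmt10G0 n = stmt10T n + stmt10F0 (stmt10T n) := by
  unfold stmt10G0 stmt10F0 stmt10T
  by_cases h1 : n = 1 <;> by_cases h2 : n = 2 <;> by_cases h3 : n = 3 <;>
    simp [h1, h2, h3]

private lemma stmt10F0_sum (n : ℤ) : n + stmt10F0 n < 1 := by
  unfold stmt10F0; split_ifs <;> omega

private lemma stmt10G0_sum (n : ℤ) : n + stmt10G0 n < 1 := by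
  unfold stmt10G0; split_ifs <;> omega

private lemma stmt10T_invl (n : ℤ) : stmt10Ti (stmt10T n) = n := by
  unfold stmt10T stmt10Ti
  by_cases h1 : n = 1 <;> by_cases h2 : n = 2 <;> by_cases h3 : n = 3 <;>
    simp [h1, h2, h3]

private lemma stmt10T_invr (n : ℤ) : stmt10T (stmt10Ti n) = n := by
  unfold stmt10T stmt10Ti
  by_cases h1 : n = 1 <;> by_cases h2 : n = 2 <;> by_cases h3 : n = 3 <;>
    simp [h1, h2, h3]

private lemma stmt10T_mem {n : ℤ} (hn : 1 ≤ n) : 1 ≤ stmt10T n := by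
  unfold stmt10T; split_ifs <;> omega

private lemma stmt10Ti_mem {n : ℤ} (hn : 1 ≤ n) : 1 ≤ stmt10Ti n := by
  unfold stmt10Ti; split_ifs <;> omega

/-- Every nontrivial torsion-free abelian group fails to have the acyclic matching
property at order ∞: there are infinite equinumerous subsets `A`, `B` and two
distinct matchings `f, g : A → B` with `m_f = m_g`. -/
theorem stmt10 (G : Type*) [AddCommGroup G] [Nontrivial G]
    (htf : ∀ (g : G) (n : ℕ), 0 < n → n • g = 0 → g = 0) :
    ∃ (A B : Set G) (f g : A → B), A.Infinite ∧ B.Infinite ∧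
      Cardinal.mk A = Cardinal.mk B ∧
      IsMatching A B f ∧ IsMatching A B g ∧ f ≠ g ∧
      matchCountC A B f = matchCountC A B g := by
  classical
  obtain ⟨e, he⟩ := exists_ne (0 : G)
  set u : ℤ → G := fun n : ℤ => n • e with hudef
  have hzero : ∀ k : ℤ, k • e = 0 → k = 0 := by
    intro k hk
    by_contra hk0
    rcases lt_or_gt_of_ne hk0 with h | h
    · have h1 : (0:ℤ) < -k := by omega
      have h2 : ((-k).toNat : ℤ) • e = 0 := by
        rw [Int.toNat_of_nonneg (by omega)]
        simp [hk]
      rw [natCast_zsmul] at h2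
      exact he (htf e (-k).toNat (by omega) h2)
    · have h2 : (k.toNat : ℤ) • e = 0 := by
        rw [Int.toNat_of_nonneg (by omega)]; exact hk
      rw [natCast_zsmul] at h2
      exact he (htf e k.toNat (by omega) h2)
  have hu : Function.Injective u := by
    intro m n h
    simp only [hudef] at h
    have h0 : (m - n) • e = 0 := by simp [sub_zsmul, h]
    have := hzero _ h0
    omega
  have huadd : ∀ m n : ℤ, u (m + n) = u m + u n := fun m n => add_zsmul e m n
  set v : G → ℤ := Function.invFun u with hvdef
  have hv : ∀ n, v (u n) = n := fun n => Function.leftInverse_invFun hu n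
  set A : Set G := u '' {n | 1 ≤ n} with hA
  set B : Set G := u '' (stmt10F0 '' {n | 1 ≤ n}) with hB
  have hmemA : ∀ n : ℤ, 1 ≤ n → u n ∈ A := fun n hn => ⟨n, hn, rfl⟩
  have hmemB : ∀ n : ℤ, 1 ≤ n → u (stmt10F0 n) ∈ B := fun n hn => ⟨stmt10F0 n, ⟨n, hn, rfl⟩, rfl⟩
  have hmemBg : ∀ n : ℤ, 1 ≤ n → u (stmt10G0 n) ∈ B := by
    intro n hn
    rw [stmt10G0_eq]
    exact hmemB _ (stmt10Ti_mem hn)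
  let f : A → B := fun a => ⟨u (stmt10F0 (v a)), by
    obtain ⟨n, hn, h⟩ := a.2
    rw [← h, hv]; exact hmemB n hn⟩
  let g : A → B := fun a => ⟨u (stmt10G0 (v a)), by
    obtain ⟨n, hn, h⟩ := a.2
    rw [← h, hv]; exact hmemBg n hn⟩
  have hfval : ∀ (a : A) (n : ℤ), (a : G) = u n → ((f a : G)) = u (stmt10F0 n) := by
    intro a n h; simp [f, h, hv]
  have hgval : ∀ (a : A) (n : ℤ), (a : G) = u n → ((g a : G)) = u (stmt10G0 n) := by
    intro a n h; simp [g, h, hv]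
  have hnotinA : ∀ k : ℤ, k < 1 → u k ∉ A := by
    intro k hk hc
    obtain ⟨m, hm, hme⟩ := hc
    have := hu hme
    simp only [Set.mem_setOf_eq] at hm
    omega
  refine ⟨A, B, f, g, ?_, ?_, ?_, ?_, ?_, ?_, ?_⟩
  · exact Set.Infinite.image (hu.injOn) (Set.Ici_infinite 1)
  · exact Set.Infinite.image (hu.injOn)
      (Set.Infinite.image (fun a ha b hb h => stmt10F0_injOn ha hb h) (Set.Ici_infinite 1))
  · exact Cardinal.mk_congr ((Equiv.Set.image u _ hu).symm.trans
      ((Equiv.Set.imageOfInjOn stmt10F0 _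
        (fun a ha b hb h => stmt10F0_injOn ha hb h)).trans (Equiv.Set.image u _ hu)))
  · constructor
    · constructor
      · intro a b hab
        obtain ⟨n, hn, ha⟩ := a.2
        obtain ⟨m, hm, hb⟩ := b.2
        have h1 := hfval a n ha.symm
        have h2 := hfval b m hb.symm
        have : u (stmt10F0 n) = u (stmt10F0 m) := by
          rw [← h1, ← h2, hab]
        have := stmt10F0_injOn hn hm (hu this)
        apply Subtype.ext
        rw [← ha, ← hb, this]
      · intro b
        obtain ⟨m, ⟨n, hn, rfl⟩, hb⟩ := b.2
        refine ⟨⟨u n, hmemA n hn⟩, Subtype.ext ?_⟩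
        rw [hfval _ n rfl]; exact hb
    · intro a hc
      obtain ⟨n, hn, ha⟩ := a.2
      rw [← ha, hfval a n ha.symm, ← huadd] at hc
      exact hnotinA _ (stmt10F0_sum n) hc
  · constructor
    · constructor
      · intro a b hab
        obtain ⟨n, hn, ha⟩ := a.2
        obtain ⟨m, hm, hb⟩ := b.2
        have h1 := hgval a n ha.symm
        have h2 := hgval b m hb.symm
        have hval : u (stmt10G0 n) = u (stmt10G0 m) := by
          rw [← h1, ← h2, hab]
        rw [stmt10G0_eq, stmt10G0_eq] at hval
        have := stmt10F0_injOn (stmt10Ti_mem hn) (stmt10Ti_mem hm) (hu hval)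
        have : n = m := by
          have := congrArg stmt10T this
          rwa [stmt10T_invr, stmt10T_invr] at this
        apply Subtype.ext
        rw [← ha, ← hb, this]
      · intro b
        obtain ⟨m, ⟨n, hn, rfl⟩, hb⟩ := b.2
        refine ⟨⟨u (stmt10T n), hmemA _ (stmt10T_mem hn)⟩, Subtype.ext ?_⟩
        rw [hgval _ (stmt10T n) rfl, stmt10G0_eq, stmt10T_invl]
        exact hb
    · intro a hc
      obtain ⟨n, hn, ha⟩ := a.2
      rw [← ha, hgval a n ha.symm, ← huadd] at hc
      exact hnotinA _ (stmt10G0_sum n) hc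
  · intro hfg
    set a : A := ⟨u 1, hmemA 1 le_rfl⟩ with hadef
    have hva : (a : G) = u 1 := rfl
    have hf := hfval a 1 hva
    have hg := hgval a 1 hva
    rw [hfg] at hf
    have : u (stmt10F0 1) = u (stmt10G0 1) := by rw [← hf, ← hg]
    have := hu this
    norm_num [stmt10F0, stmt10G0] at this
  · funext x
    have e1 : {a : A // (a : G) + ((f a) : G) = x} ≃
        {n : ℤ // 1 ≤ n ∧ u (n + stmt10F0 n) = x} := by
      refine ⟨fun p => ⟨v (p.1 : G), ?_⟩, fun q => ⟨⟨u q.1, hmemA q.1 q.2.1⟩, ?_⟩, ?_, ?_⟩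
      · obtain ⟨n, hn, ha⟩ := p.1.2
        rw [← ha, hv]
        refine ⟨hn, ?_⟩
        rw [huadd, ← hfval p.1 n ha.symm, ha]
        exact p.2
      · show u q.1 + ((f ⟨u q.1, hmemA q.1 q.2.1⟩ : B) : G) = x
        rw [hfval _ q.1 rfl, ← huadd]
        exact q.2.2
      · intro p
        apply Subtype.ext; apply Subtype.ext
        obtain ⟨n, hn, ha⟩ := p.1.2
        show u (v (p.1 : G)) = (p.1 : G)
        rw [← ha, hv]
      · intro q
        apply Subtype.ext
        show v (u q.1) = q.1
        exact hv q.1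
    have e2 : {a : A // (a : G) + ((g a) : G) = x} ≃
        {n : ℤ // 1 ≤ n ∧ u (n + stmt10G0 n) = x} := by
      refine ⟨fun p => ⟨v (p.1 : G), ?_⟩, fun q => ⟨⟨u q.1, hmemA q.1 q.2.1⟩, ?_⟩, ?_, ?_⟩
      · obtain ⟨n, hn, ha⟩ := p.1.2
        rw [← ha, hv]
        refine ⟨hn, ?_⟩
        rw [huadd, ← hgval p.1 n ha.symm, ha]
        exact p.2
      · show u q.1 + ((g ⟨u q.1, hmemA q.1 q.2.1⟩ : B) : G) = x
        rw [hgval _ q.1 rfl, ← huadd]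
        exact q.2.2
      · intro p
        apply Subtype.ext; apply Subtype.ext
        obtain ⟨n, hn, ha⟩ := p.1.2
        show u (v (p.1 : G)) = (p.1 : G)
        rw [← ha, hv]
      · intro q
        apply Subtype.ext
        show v (u q.1) = q.1
        exact hv q.1
    have e3 : {n : ℤ // 1 ≤ n ∧ u (n + stmt10G0 n) = x} ≃
        {n : ℤ // 1 ≤ n ∧ u (n + stmt10F0 n) = x} := by
      refine ⟨fun p => ⟨stmt10T p.1, stmt10T_mem p.2.1, ?_⟩,
        fun q => ⟨stmt10Ti q.1, stmt10Ti_mem q.2.1, ?_⟩, ?_, ?_⟩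
      · rw [← stmt10_sum]; exact p.2.2
      · rw [stmt10_sum, stmt10T_invr]; exact q.2.2
      · intro p; apply Subtype.ext; exact stmt10T_invl p.1
      · intro q; apply Subtype.ext; exact stmt10T_invr q.1
    exact Cardinal.mk_congr (e1.trans (e3.symm.trans e2.symm))
end

section
/- Let G be a nontrivial Abelian group that is not isomorphic to ℤ/2ℤ, ℤ/3ℤ, or ℤ/5ℤ. If G has the finite acyclic matching property, then there exists m (a natural number or ∞) such that G fails to have the acyclic matching property at order m; that is, there exist subsets A and B of G with #A = #B = m and two distinct matchings f, g : A → B with m_f = m_g. -/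
/-- A matching `f` is acyclic if any matching `g` with `m_g = m_f` equals `f`. -/
def IsAcyclicMatching {G : Type*} [AddCommGroup G] (A B : Set G) (f : A → B) : Prop :=
  IsMatching A B f ∧
    ∀ g : A → B, IsMatching A B g → matchCount A B g = matchCount A B f → g = f

/-- `G` has the finite acyclic matching property if for all nonempty finite subsets
`A`, `B` with `#A = #B` and `0 ∉ B` there is an acyclic matching from `A` to `B`. -/
def HasFiniteAcyclicMatchingProperty (G : Type*) [AddCommGroup G] : Prop :=
  ∀ A B : Set G, A.Finite → B.Finite → A.Nonempty → B.Nonempty →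
    A.ncard = B.ncard → (0 : G) ∉ B → ∃ f : A → B, IsAcyclicMatching A B f

lemma core3 {G : Type*} [AddCommGroup G] (a1 a2 a3 b1 b2 b3 : G)
    (ha12 : a1 ≠ a2) (ha13 : a1 ≠ a3) (ha23 : a2 ≠ a3)
    (hb12 : b1 ≠ b2) (hb13 : b1 ≠ b3) (hb23 : b2 ≠ b3)
    (e1 : a1 + b1 = a2 + b3) (e2 : a2 + b2 = a3 + b1) (e3 : a3 + b3 = a1 + b2)
    (n11 : a1 + b1 ≠ a1) (n12 : a1 + b1 ≠ a2) (n13 : a1 + b1 ≠ a3)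
    (n21 : a2 + b2 ≠ a1) (n22 : a2 + b2 ≠ a2) (n23 : a2 + b2 ≠ a3)
    (n31 : a3 + b3 ≠ a1) (n32 : a3 + b3 ≠ a2) (n33 : a3 + b3 ≠ a3) :
    ∃ (A B : Set G) (f g : A → B), Cardinal.mk A = Cardinal.mk B ∧
      IsMatching A B f ∧ IsMatching A B g ∧ f ≠ g ∧
      matchCountC A B f = matchCountC A B g := by
  classical
  set A : Set G := {a1, a2, a3} with hA
  set B : Set G := {b1, b2, b3} with hB
  have mA1 : a1 ∈ A := by simp [hA]
  have mA2 : a2 ∈ A := by simp [hA]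
  have mA3 : a3 ∈ A := by simp [hA]
  let F : G → G := fun t => if t = a1 then b1 else if t = a2 then b2 else b3
  let Gf : G → G := fun t => if t = a1 then b2 else if t = a2 then b3 else b1
  let P : G → G := fun t => if t = a1 then a2 else if t = a2 then a3 else a1
  have hF1 : F a1 = b1 := by simp [F]
  have hF2 : F a2 = b2 := by simp [F, Ne.symm ha12]
  have hF3 : F a3 = b3 := by simp [F, Ne.symm ha13, Ne.symm ha23]
  have hG1 : Gf a1 = b2 := by simp [Gf]
  have hG2 : Gf a2 = b3 := by simp [Gf, Ne.symm ha12]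
  have hG3 : Gf a3 = b1 := by simp [Gf, Ne.symm ha13, Ne.symm ha23]
  have hP1 : P a1 = a2 := by simp [P]
  have hP2 : P a2 = a3 := by simp [P, Ne.symm ha12]
  have hP3 : P a3 = a1 := by simp [P, Ne.symm ha13, Ne.symm ha23]
  have hFB : ∀ t : G, F t ∈ B := by intro t; simp only [F]; split_ifs <;> simp [hB]
  have hGB : ∀ t : G, Gf t ∈ B := by intro t; simp only [Gf]; split_ifs <;> simp [hB]
  have hPA : ∀ t : G, P t ∈ A := by intro t; simp only [P]; split_ifs <;> simp [hA]
  let f : A → B := fun p => ⟨F p, hFB p⟩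
  let g : A → B := fun p => ⟨Gf p, hGB p⟩
  let ψ : A → A := fun p => ⟨P p, hPA p⟩
  have mem3 : ∀ p : A, (p : G) = a1 ∨ (p : G) = a2 ∨ (p : G) = a3 := by
    intro p
    have h : (p : G) ∈ ({a1, a2, a3} : Set G) := p.2
    simp only [Set.mem_insert_iff, Set.mem_singleton_iff] at h
    exact h
  have memB3 : ∀ q : B, (q : G) = b1 ∨ (q : G) = b2 ∨ (q : G) = b3 := by
    intro q
    have h : (q : G) ∈ ({b1, b2, b3} : Set G) := q.2
    simp only [Set.mem_insert_iff, Set.mem_singleton_iff] at h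
    exact h
  have finj : Function.Injective f := by
    intro p q h
    have hval : F (p : G) = F (q : G) := congrArg Subtype.val h
    rcases mem3 p with hp | hp | hp <;> rcases mem3 q with hq | hq | hq <;>
      simp only [hp, hq, hF1, hF2, hF3] at hval <;>
      first
        | exact Subtype.ext (hp.trans hq.symm)
        | exact absurd hval hb12
        | exact absurd hval hb13
        | exact absurd hval hb23
        | exact absurd hval.symm hb12
        | exact absurd hval.symm hb13
        | exact absurd hval.symm hb23
  have fsurj : Function.Surjective f := by
    intro q
    rcases memB3 q with hq | hq | hq
    · exact ⟨⟨a1, mA1⟩, Subtype.ext (by show F a1 = (q : G); rw [hF1, hq])⟩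
    · exact ⟨⟨a2, mA2⟩, Subtype.ext (by show F a2 = (q : G); rw [hF2, hq])⟩
    · exact ⟨⟨a3, mA3⟩, Subtype.ext (by show F a3 = (q : G); rw [hF3, hq])⟩
  have ginj : Function.Injective g := by
    intro p q h
    have hval : Gf (p : G) = Gf (q : G) := congrArg Subtype.val h
    rcases mem3 p with hp | hp | hp <;> rcases mem3 q with hq | hq | hq <;>
      simp only [hp, hq, hG1, hG2, hG3] at hval <;>
      first
        | exact Subtype.ext (hp.trans hq.symm)
        | exact absurd hval hb12
        | exact absurd hval hb13
        | exact absurd hval hb23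
        | exact absurd hval.symm hb12
        | exact absurd hval.symm hb13
        | exact absurd hval.symm hb23
  have gsurj : Function.Surjective g := by
    intro q
    rcases memB3 q with hq | hq | hq
    · exact ⟨⟨a3, mA3⟩, Subtype.ext (by show Gf a3 = (q : G); rw [hG3, hq])⟩
    · exact ⟨⟨a1, mA1⟩, Subtype.ext (by show Gf a1 = (q : G); rw [hG1, hq])⟩
    · exact ⟨⟨a2, mA2⟩, Subtype.ext (by show Gf a2 = (q : G); rw [hG2, hq])⟩
  have ψinj : Function.Injective ψ := by
    intro p q h
    have hval : P (p : G) = P (q : G) := congrArg Subtype.val h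
    rcases mem3 p with hp | hp | hp <;> rcases mem3 q with hq | hq | hq <;>
      simp only [hp, hq, hP1, hP2, hP3] at hval <;>
      first
        | exact Subtype.ext (hp.trans hq.symm)
        | exact absurd hval ha12
        | exact absurd hval ha13
        | exact absurd hval ha23
        | exact absurd hval.symm ha12
        | exact absurd hval.symm ha13
        | exact absurd hval.symm ha23
  have ψsurj : Function.Surjective ψ := by
    intro q
    rcases mem3 q with hq | hq | hq
    · exact ⟨⟨a3, mA3⟩, Subtype.ext (by show P a3 = (q : G); rw [hP3, hq])⟩
    · exact ⟨⟨a1, mA1⟩, Subtype.ext (by show P a1 = (q : G); rw [hP1, hq])⟩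
    · exact ⟨⟨a2, mA2⟩, Subtype.ext (by show P a2 = (q : G); rw [hP2, hq])⟩
  have notmem : ∀ t : G, t ≠ a1 → t ≠ a2 → t ≠ a3 → t ∉ A := by
    intro t h1 h2 h3
    simp only [hA, Set.mem_insert_iff, Set.mem_singleton_iff, not_or]
    exact ⟨h1, h2, h3⟩
  have fmatch : ∀ p : A, (p : G) + ((f p : G)) ∉ A := by
    intro p
    show (p : G) + F (p : G) ∉ A
    rcases mem3 p with hp | hp | hp <;> rw [hp]
    · rw [hF1]; exact notmem _ n11 n12 n13
    · rw [hF2]; exact notmem _ n21 n22 n23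
    · rw [hF3]; exact notmem _ n31 n32 n33
  have gmatch : ∀ p : A, (p : G) + ((g p : G)) ∉ A := by
    intro p
    show (p : G) + Gf (p : G) ∉ A
    rcases mem3 p with hp | hp | hp <;> rw [hp]
    · rw [hG1, ← e3]; exact notmem _ n31 n32 n33
    · rw [hG2, ← e1]; exact notmem _ n11 n12 n13
    · rw [hG3, ← e2]; exact notmem _ n21 n22 n23
  have key : ∀ p : A, ((ψ p : G)) + ((g (ψ p) : G)) = (p : G) + ((f p : G)) := by
    intro p
    show P (p : G) + Gf (P (p : G)) = (p : G) + F (p : G)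
    rcases mem3 p with hp | hp | hp <;> rw [hp]
    · rw [hP1, hG2, hF1]; exact e1.symm
    · rw [hP2, hG3, hF2]; exact e2.symm
    · rw [hP3, hG1, hF3]; exact e3.symm
  refine ⟨A, B, f, g, ?_, ⟨⟨finj, fsurj⟩, fmatch⟩, ⟨⟨ginj, gsurj⟩, gmatch⟩, ?_, ?_⟩
  · exact Cardinal.mk_congr (Equiv.ofBijective f ⟨finj, fsurj⟩)
  · intro h
    have h1 : ((f ⟨a1, mA1⟩ : B) : G) = ((g ⟨a1, mA1⟩ : B) : G) := by rw [h]
    have h2 : F a1 = Gf a1 := h1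
    rw [hF1, hG1] at h2
    exact hb12 h2
  · funext x
    exact Cardinal.mk_congr
      (Equiv.subtypeEquiv (Equiv.ofBijective ψ ⟨ψinj, ψsurj⟩) (fun p => by
        show ((p : G) + ((f p : G)) = x) ↔ ((ψ p : G) + ((g (ψ p) : G)) = x)
        rw [key p]))

lemma noAcyclic {G : Type*} [AddCommGroup G] (u v : G) (hu : u ≠ 0) (hv : v ≠ 0)
    (hvu : v ≠ u) (huu : u + u = 0)
    (hfa : HasFiniteAcyclicMatchingProperty G) : False := by
  classical
  have hfin1 : ({0, u} : Set G).Finite := (Set.finite_singleton u).insert 0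
  have hfin2 : ({v, u} : Set G).Finite := (Set.finite_singleton u).insert v
  have hne1 : ({0, u} : Set G).Nonempty := ⟨0, by simp⟩
  have hne2 : ({v, u} : Set G).Nonempty := ⟨v, by simp⟩
  have hcard : ({0, u} : Set G).ncard = ({v, u} : Set G).ncard := by
    rw [Set.ncard_pair (Ne.symm hu), Set.ncard_pair hvu]
  have h0B : (0 : G) ∉ ({v, u} : Set G) := by
    simp only [Set.mem_insert_iff, Set.mem_singleton_iff, not_or]
    exact ⟨Ne.symm hv, Ne.symm hu⟩
  obtain ⟨f, ⟨⟨hinj, -⟩, hsum⟩, -⟩ := hfa {0, u} {v, u} hfin1 hfin2 hne1 hne2 hcard h0B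
  have m0 : (0 : G) ∈ ({0, u} : Set G) := by simp
  have mu : u ∈ ({0, u} : Set G) := by simp
  have hf0 : ((f ⟨0, m0⟩ : G)) = v ∨ ((f ⟨0, m0⟩ : G)) = u := by
    have h : ((f ⟨0, m0⟩ : G)) ∈ ({v, u} : Set G) := (f ⟨0, m0⟩).2
    simp only [Set.mem_insert_iff, Set.mem_singleton_iff] at h
    exact h
  rcases hf0 with h1 | h1
  · have hfu : ((f ⟨u, mu⟩ : G)) = v ∨ ((f ⟨u, mu⟩ : G)) = u := by
      have h : ((f ⟨u, mu⟩ : G)) ∈ ({v, u} : Set G) := (f ⟨u, mu⟩).2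
      simp only [Set.mem_insert_iff, Set.mem_singleton_iff] at h
      exact h
    rcases hfu with h2 | h2
    · have : (⟨0, m0⟩ : ({0, u} : Set G)) = ⟨u, mu⟩ :=
        hinj (Subtype.ext (h1.trans h2.symm))
      exact hu (congrArg Subtype.val this).symm
    · have := hsum ⟨u, mu⟩
      rw [h2, huu] at this
      exact this (by simp)
  · have := hsum ⟨0, m0⟩
    rw [h1, zero_add] at this
    exact this (by simp)


section zmod
variable {G : Type*} [AddCommGroup G]

lemma toZMod2 (x : G) (hx : x ≠ 0) (hxx : x + x = 0)
    (hcov : ∀ t : G, t = 0 ∨ t = x) : Nonempty (ZMod 2 ≃+ G) := by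
  have hcond : (zmultiplesHom G x) ((2 : ℕ) : ℤ) = 0 := by
    show ((2 : ℕ) : ℤ) • x = 0
    norm_num [two_zsmul, hxx]
  set φ : ZMod 2 →+ G := ZMod.lift 2 ⟨zmultiplesHom G x, hcond⟩ with hφ
  have hval : ∀ k : ℤ, φ ((k : ℤ) : ZMod 2) = k • x := by
    intro k; rw [hφ, ZMod.lift_coe]; rfl
  have hv1 : φ 1 = x := by
    rw [show (1 : ZMod 2) = ((1 : ℤ) : ZMod 2) by norm_cast, hval, one_zsmul]
  have hinj : Function.Injective φ := by
    refine (injective_iff_map_eq_zero φ).2 ?_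
    have hall : ∀ a : ZMod 2, a = 0 ∨ a = 1 := by decide
    intro a ha
    rcases hall a with rfl | rfl
    · rfl
    · rw [hv1] at ha; exact absurd ha hx
  have hsurj : Function.Surjective φ := by
    intro t
    rcases hcov t with h | h
    · exact ⟨0, by rw [h]; exact map_zero φ⟩
    · exact ⟨1, by rw [hv1, h]⟩
  exact ⟨AddEquiv.ofBijective φ ⟨hinj, hsurj⟩⟩

lemma toZMod3 (x : G) (h3x : x + x + x = 0) (h2x : x + x ≠ 0)
    (hcov : ∀ t : G, t = 0 ∨ t = x ∨ t = -x ∨ t = x + x ∨ t = -(x + x)) :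
    Nonempty (ZMod 3 ≃+ G) := by
  have hx : x ≠ 0 := fun h => h2x (by rw [h, add_zero])
  have hcond : (zmultiplesHom G x) ((3 : ℕ) : ℤ) = 0 := by
    show ((3 : ℕ) : ℤ) • x = 0
    have : ((3 : ℕ) : ℤ) = 2 + 1 := by norm_num
    rw [this, add_zsmul, two_zsmul, one_zsmul, h3x]
  set φ : ZMod 3 →+ G := ZMod.lift 3 ⟨zmultiplesHom G x, hcond⟩ with hφ
  have hval : ∀ k : ℤ, φ ((k : ℤ) : ZMod 3) = k • x := by
    intro k; rw [hφ, ZMod.lift_coe]; rfl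
  have hv1 : φ 1 = x := by
    rw [show (1 : ZMod 3) = ((1 : ℤ) : ZMod 3) by norm_cast, hval, one_zsmul]
  have hv2 : φ 2 = x + x := by
    rw [show (2 : ZMod 3) = ((2 : ℤ) : ZMod 3) by norm_cast, hval, two_zsmul]
  have hinj : Function.Injective φ := by
    refine (injective_iff_map_eq_zero φ).2 ?_
    have hall : ∀ a : ZMod 3, a = 0 ∨ a = 1 ∨ a = 2 := by decide
    intro a ha
    rcases hall a with rfl | rfl | rfl
    · rfl
    · rw [hv1] at ha; exact absurd ha hx
    · rw [hv2] at ha; exact absurd ha h2x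
  have hsurj : Function.Surjective φ := by
    have hm1 : φ ((-1 : ℤ) : ZMod 3) = -x := by rw [hval]; simp
    have hm2 : φ ((-2 : ℤ) : ZMod 3) = -(x + x) := by
      rw [hval, show (-2 : ℤ) = -(2 : ℤ) by norm_num, neg_zsmul, two_zsmul]
    intro t
    rcases hcov t with h | h | h | h | h
    · exact ⟨0, by rw [h]; exact map_zero φ⟩
    · exact ⟨1, by rw [hv1, h]⟩
    · exact ⟨((-1 : ℤ) : ZMod 3), by rw [hm1, h]⟩
    · exact ⟨2, by rw [hv2, h]⟩
    · exact ⟨((-2 : ℤ) : ZMod 3), by rw [hm2, h]⟩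
  exact ⟨AddEquiv.ofBijective φ ⟨hinj, hsurj⟩⟩

lemma toZMod5 (x : G) (h5x : x + x + x + x + x = 0) (h2x : x + x ≠ 0)
    (hcov : ∀ t : G, t = 0 ∨ t = x ∨ t = -x ∨ t = x + x ∨ t = -(x + x)) :
    Nonempty (ZMod 5 ≃+ G) := by
  have hx : x ≠ 0 := fun h => h2x (by rw [h, add_zero])
  have h3x : x + x + x ≠ 0 := by
    intro hh
    apply h2x
    have h' : x + x = (x + x + x + x + x) - (x + x + x) := by abel
    rw [h5x, hh, sub_zero] at h'
    exact h'
  have h4x : x + x + x + x ≠ 0 := by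
    intro hh
    apply hx
    have h' : x = (x + x + x + x + x) - (x + x + x + x) := by abel
    rw [h5x, hh, sub_zero] at h'
    exact h'
  have hcond : (zmultiplesHom G x) ((5 : ℕ) : ℤ) = 0 := by
    show ((5 : ℕ) : ℤ) • x = 0
    have : ((5 : ℕ) : ℤ) = 2 + 2 + 1 := by norm_num
    rw [this, add_zsmul, add_zsmul, two_zsmul, one_zsmul]
    rw [show x + x + (x + x) + x = x + x + x + x + x by abel, h5x]
  set φ : ZMod 5 →+ G := ZMod.lift 5 ⟨zmultiplesHom G x, hcond⟩ with hφ
  have hval : ∀ k : ℤ, φ ((k : ℤ) : ZMod 5) = k • x := by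
    intro k; rw [hφ, ZMod.lift_coe]; rfl
  have hv1 : φ 1 = x := by
    rw [show (1 : ZMod 5) = ((1 : ℤ) : ZMod 5) by norm_cast, hval, one_zsmul]
  have hv2 : φ 2 = x + x := by
    rw [show (2 : ZMod 5) = ((2 : ℤ) : ZMod 5) by norm_cast, hval, two_zsmul]
  have hv3 : φ 3 = x + x + x := by
    rw [show (3 : ZMod 5) = ((3 : ℤ) : ZMod 5) by norm_cast, hval,
      show (3 : ℤ) = 2 + 1 by norm_num, add_zsmul, two_zsmul, one_zsmul]
  have hv4 : φ 4 = x + x + x + x := by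
    rw [show (4 : ZMod 5) = ((4 : ℤ) : ZMod 5) by norm_cast, hval,
      show (4 : ℤ) = 2 + 2 by norm_num, add_zsmul, two_zsmul]
    abel
  have hinj : Function.Injective φ := by
    refine (injective_iff_map_eq_zero φ).2 ?_
    have hall : ∀ a : ZMod 5, a = 0 ∨ a = 1 ∨ a = 2 ∨ a = 3 ∨ a = 4 := by decide
    intro a ha
    rcases hall a with rfl | rfl | rfl | rfl | rfl
    · rfl
    · rw [hv1] at ha; exact absurd ha hx
    · rw [hv2] at ha; exact absurd ha h2x
    · rw [hv3] at ha; exact absurd ha h3x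
    · rw [hv4] at ha; exact absurd ha h4x
  have hsurj : Function.Surjective φ := by
    have hm1 : φ ((-1 : ℤ) : ZMod 5) = -x := by rw [hval]; simp
    have hm2 : φ ((-2 : ℤ) : ZMod 5) = -(x + x) := by
      rw [hval, show (-2 : ℤ) = -(2 : ℤ) by norm_num, neg_zsmul, two_zsmul]
    intro t
    rcases hcov t with h | h | h | h | h
    · exact ⟨0, by rw [h]; exact map_zero φ⟩
    · exact ⟨1, by rw [hv1, h]⟩
    · exact ⟨((-1 : ℤ) : ZMod 5), by rw [hm1, h]⟩
    · exact ⟨2, by rw [hv2, h]⟩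
    · exact ⟨((-2 : ℤ) : ZMod 5), by rw [hm2, h]⟩
  exact ⟨AddEquiv.ofBijective φ ⟨hinj, hsurj⟩⟩

end zmod

/-- If a nontrivial abelian group `G` not isomorphic to `ℤ/2ℤ`, `ℤ/3ℤ` or `ℤ/5ℤ`
has the finite acyclic matching property, then it fails to have the acyclic matching
property at some order `m ∈ ℕ ∪ {∞}`: there exist equinumerous subsets `A`, `B`
and two distinct matchings `f, g : A → B` with `m_f = m_g`. -/
theorem stmt12 (G : Type*) [AddCommGroup G] [Nontrivial G]
    (h2 : IsEmpty (G ≃+ ZMod 2)) (h3 : IsEmpty (G ≃+ ZMod 3))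
    (h5 : IsEmpty (G ≃+ ZMod 5))
    (hfa : HasFiniteAcyclicMatchingProperty G) :
    ∃ (A B : Set G) (f g : A → B), Cardinal.mk A = Cardinal.mk B ∧
      IsMatching A B f ∧ IsMatching A B g ∧ f ≠ g ∧
      matchCountC A B f = matchCountC A B g := by
  classical
  by_cases hE : ∃ x y : G, x + x ≠ 0 ∧ y ≠ 0 ∧ y ≠ x ∧ y ≠ -x ∧ y ≠ x + x ∧ y ≠ -(x + x)
  · obtain ⟨x, y, h2x, hy0, hyx, hyn, hy2, hyn2⟩ := hE
    have hx0 : x ≠ 0 := fun h => h2x (by rw [h, add_zero])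
    refine core3 0 x y (x + x) (x + y) x (Ne.symm hx0) (Ne.symm hy0) (Ne.symm hyx)
      ?_ ?_ ?_ (by abel) (by abel) (by abel) ?_ ?_ ?_ ?_ ?_ ?_ ?_ ?_ ?_
    · intro h; exact hyx ((add_left_cancel h).symm)
    · intro h; apply hx0
      have h' : x + x = x + 0 := by rw [add_zero]; exact h
      exact add_left_cancel h'
    · intro h; apply hy0
      have h' : x + y = x + 0 := by rw [add_zero]; exact h
      exact add_left_cancel h'
    · rw [zero_add]; exact h2x
    · rw [zero_add]; intro h; apply hx0
      have h' : x + x = x + 0 := by rw [add_zero]; exact h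
      exact add_left_cancel h'
    · rw [zero_add]; exact Ne.symm hy2
    · intro h; apply hyn2
      have h' : y = x + (x + y) - (x + x) := by abel
      rw [h, zero_sub] at h'; exact h'
    · intro h; apply hyn
      have h0 : x + y = 0 := by
        have h' : x + (x + y) = x + 0 := by rw [add_zero]; exact h
        exact add_left_cancel h'
      have h'' : y = (x + y) - x := by abel
      rw [h0, zero_sub] at h''; exact h''
    · intro h; apply h2x
      have h' : x + x = (x + (x + y)) - y := by abel
      rw [h] at h'; simpa using h'
    · intro h; apply hyn
      have h' : y = (y + x) - x := by abel
      rw [h, zero_sub] at h'; exact h'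
    · intro h; apply hy0
      have h' : y = (y + x) - x := by abel
      rw [h] at h'; simpa using h'
    · intro h; apply hx0
      have h' : x = (y + x) - y := by abel
      rw [h] at h'; simpa using h'
  · push_neg at hE
    by_cases hexp : ∀ t : G, t + t = 0
    · obtain ⟨x, hx0⟩ := exists_ne (0 : G)
      by_cases hy : ∃ y : G, y ≠ 0 ∧ y ≠ x
      · obtain ⟨y, hy0, hyx⟩ := hy
        exact (noAcyclic x y hx0 hy0 hyx (hexp x) hfa).elim
      · push_neg at hy
        have hcov : ∀ t : G, t = 0 ∨ t = x := by
          intro t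
          by_cases h : t = 0
          · exact Or.inl h
          · exact Or.inr (hy t h)
        obtain ⟨e⟩ := toZMod2 x hx0 (hexp x) hcov
        exact h2.elim e.symm
    · push_neg at hexp
      obtain ⟨x, h2x⟩ := hexp
      have hx0 : x ≠ 0 := fun h => h2x (by rw [h, add_zero])
      have hcov : ∀ t : G, t = 0 ∨ t = x ∨ t = -x ∨ t = x + x ∨ t = -(x + x) := by
        intro t
        by_cases h0 : t = 0
        · exact Or.inl h0
        by_cases h1 : t = x
        · exact Or.inr (Or.inl h1)
        by_cases hm : t = -x
        · exact Or.inr (Or.inr (Or.inl hm))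
        by_cases h22 : t = x + x
        · exact Or.inr (Or.inr (Or.inr (Or.inl h22)))
        exact Or.inr (Or.inr (Or.inr (Or.inr (hE x t h2x h0 h1 hm h22))))
      rcases hcov (x + x + x) with h | h | h | h | h
      · obtain ⟨e⟩ := toZMod3 x h h2x hcov
        exact h3.elim e.symm
      · exfalso; apply h2x
        have h' : x + x = (x + x + x) - x := by abel
        rw [h] at h'; simpa using h'
      · have h4 : (x + x) + (x + x) = 0 := by
          have h' : (x + x) + (x + x) = (x + x + x) + x := by abel
          rw [h', h]; exact neg_add_cancel x
        have hvu : x ≠ x + x := by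
          intro hh; apply hx0
          have h' : x = (x + x) - x := by abel
          rw [← hh] at h'; simpa using h'
        exact (noAcyclic (x + x) x h2x hx0 hvu h4 hfa).elim
      · exfalso; apply hx0
        have h' : x = (x + x + x) - (x + x) := by abel
        rw [h] at h'; simpa using h'
      · have h5' : x + x + x + x + x = 0 := by
          have h' : x + x + x + x + x = (x + x + x) + (x + x) := by abel
          rw [h', h]; exact neg_add_cancel (x + x)
        obtain ⟨e⟩ := toZMod5 x h5' h2x hcov
        exact h5.elim e.symm
end

section
/- Let K ⊊ L be a field extension with [L : K] = n finite, #K ≥ 5, and no intermediate field M with K ⊊ M ⊊ L. Then for every natural number m with 1 ≤ m ≤ (n+1)/4, the extension K ⊆ L fails to have the linear acyclic matching property at order m. -/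
section
variable {K L : Type*} [Field K] [Field L] [Algebra K L]

/-- A basis `v` of `A` is matched to a basis `w` of `B` if for every `b ∈ B` and
every `i`, `v i * b ∈ A` implies that `b` lies in the span of `w j`, `j ≠ i`. -/
def BasesMatched {n : ℕ} {A B : Submodule K L}
    (v : Module.Basis (Fin n) K A) (w : Module.Basis (Fin n) K B) : Prop :=
  ∀ (b : B) (i : Fin n), (v i : L) * (b : L) ∈ A →
    b ∈ Submodule.span K (⇑w '' {j : Fin n | j ≠ i})

/-- `A` is matched with `B` if every basis of `A` can be matched to a basis of `B`. -/
def SubspaceMatched (n : ℕ) (A B : Submodule K L) : Prop :=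
  ∀ v : Module.Basis (Fin n) K A, ∃ w : Module.Basis (Fin n) K B, BasesMatched v w

/-- The extension `K ⊆ L` has the linear matching property if for every `n ≥ 1` and
all `n`-dimensional subspaces `A`, `B` of `L` with `1 ∉ B`, `A` is matched with `B`. -/
def HasLinearMatchingProperty (K L : Type*) [Field K] [Field L] [Algebra K L] : Prop :=
  ∀ n : ℕ, 1 ≤ n → ∀ A B : Submodule K L,
    Module.finrank K A = n → Module.finrank K B = n → (1 : L) ∉ B →
    SubspaceMatched n A B

/-- A strong matching from `A` to `B` is a linear isomorphism `φ : A → B` such that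
every basis `v` of `A` is matched to the basis `φ ∘ v` of `B`. -/
def IsStrongMatching (n : ℕ) (A B : Submodule K L) (φ : A ≃ₗ[K] B) : Prop :=
  ∀ v : Module.Basis (Fin n) K A, BasesMatched v (v.map φ)

/-- Two strong matchings `f, g : A → B` are equivalent if there is a linear
isomorphism `φ : A → A` with `a * f a = φ a * g (φ a)` for all `a ∈ A`. -/
def EquivStrongMatchings {A B : Submodule K L} (f g : A ≃ₗ[K] B) : Prop :=
  ∃ φ : A ≃ₗ[K] A, ∀ a : A, (a : L) * (f a : L) = (φ a : L) * (g (φ a) : L)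

end

/-- The extension `K ⊆ L` fails to have the linear acyclic matching property at
order `m` if there are `m`-dimensional subspaces `A`, `B` of `L` and strong
matchings `f ≠ g` from `A` to `B` with `f ∼ g`. -/
def FailsLinearAcyclicAt (K L : Type*) [Field K] [Field L] [Algebra K L] (m : ℕ) : Prop :=
  ∃ (A B : Submodule K L) (f g : A ≃ₗ[K] B),
    Module.finrank K A = m ∧ Module.finrank K B = m ∧
    IsStrongMatching m A B f ∧ IsStrongMatching m A B g ∧
    f ≠ g ∧ EquivStrongMatchings f g

/-!
Since there is no intermediate field, any `x ∉ K` generates `L`, so `1, x, …, x^(n-1)` are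
linearly independent. Put `A = span {1, …, x^(m-1)}` and `B = span {x^m, …, x^(2m-1)}`. All
products `a * b` lie in `span {x^m, …, x^(3m-2)}`, which meets `A` only in `0` because
`3m - 2 < n`; hence `a * b ∈ A` forces `a * b = 0`, the matching condition holds vacuously,
and every isomorphism `f : A ≃ B` is a strong matching. Choosing `d ∈ K` with `d² ∉ {0, 1}`
(possible as `#K ≥ 4`), `f` and `d⁻² • f` are distinct, and `φ = d • id` witnesses
`a * f a = φ a * d⁻² • f (φ a)`.
-/

open Module Set Pointwise IntermediateField

theorem LinearEquiv.trans_smulOfNeZero_ne_self {K M N : Type*} [Field K] [AddCommGroup M]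
    [Module K M] [AddCommGroup N] [Module K N] [Nontrivial M] (f : M ≃ₗ[K] N) {c : K}
    (hc0 : c ≠ 0) (hc1 : c ≠ 1) : f.trans (LinearEquiv.smulOfNeZero K N c hc0) ≠ f := by
  intro h
  obtain ⟨a, ha⟩ := exists_ne (0 : M)
  have hfa : c • f a = (1 : K) • f a := by simpa using LinearEquiv.congr_fun h a
  exact hc1 (smul_left_injective K (f.map_ne_zero_iff.mpr ha) hfa)

theorem exists_ne_one_mul_sq_eq_one {K : Type*} [Field K] (hK : 4 ≤ Cardinal.mk K) :
    ∃ c d : K, c ≠ 1 ∧ c * d ^ 2 = 1 := by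
  obtain ⟨d, hd⟩ := Cardinal.exists_notMem_of_length_lt [0, 1, -1] <|
    lt_of_lt_of_le (by norm_num) hK
  simp only [List.mem_cons, List.not_mem_nil, or_false, not_or] at hd
  refine ⟨(d ^ 2)⁻¹, d, ?_, inv_mul_cancel₀ (pow_ne_zero 2 hd.1)⟩
  rw [Ne, inv_eq_one, sq, mul_self_eq_one_iff]
  tauto

section
variable {K L : Type*} [Field K] [Field L] [Algebra K L]

theorem isStrongMatching_of_disjoint_mul {n : ℕ} {A B : Submodule K L}
    (hAB : Disjoint A (A * B)) (φ : A ≃ₗ[K] B) : IsStrongMatching n A B φ := by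
  intro v b i hmem
  have hprod : (v i : L) * b = 0 :=
    Submodule.disjoint_def.mp hAB _ hmem (Submodule.mul_mem_mul (v i).2 b.2)
  have hb : b = 0 := Subtype.ext <|
    (mul_eq_zero.mp hprod).resolve_left fun h => v.ne_zero i (Subtype.ext h)
  rw [hb]
  exact zero_mem _

theorem equivStrongMatchings_trans_smulOfNeZero {A B : Submodule K L} (f : A ≃ₗ[K] B)
    {c d : K} (hc : c ≠ 0) (hcd : c * d ^ 2 = 1) :
    EquivStrongMatchings f (f.trans (LinearEquiv.smulOfNeZero K B c hc)) := by
  have hd : d ≠ 0 := by rintro rfl; simp at hcd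
  refine ⟨LinearEquiv.smulOfNeZero K A d hd, fun a => ?_⟩
  simp only [LinearEquiv.trans_apply, LinearEquiv.smulOfNeZero_apply, map_smul,
    Submodule.coe_smul, smul_mul_smul_comm, smul_smul]
  rw [show d * (d * c) = 1 by linear_combination hcd, one_smul]

theorem failsLinearAcyclicAt_of_disjoint_mul (hK : 4 ≤ Cardinal.mk K) {m : ℕ} (hm : m ≠ 0)
    {A B : Submodule K L} (hA : finrank K A = m) (hB : finrank K B = m)
    (hAB : Disjoint A (A * B)) : FailsLinearAcyclicAt K L m := by
  obtain ⟨c, d, hc1, hcd⟩ := exists_ne_one_mul_sq_eq_one hK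
  have hc0 : c ≠ 0 := left_ne_zero_of_mul_eq_one hcd
  have hA0 : 0 < finrank K A := hA ▸ Nat.pos_of_ne_zero hm
  have hB0 : 0 < finrank K B := hB ▸ Nat.pos_of_ne_zero hm
  have : FiniteDimensional K A := Module.finite_of_finrank_pos hA0
  have : FiniteDimensional K B := Module.finite_of_finrank_pos hB0
  have : Nontrivial A := Module.finrank_pos_iff.mp hA0
  let f : A ≃ₗ[K] B := LinearEquiv.ofFinrankEq A B (hA.trans hB.symm)
  exact ⟨A, B, f, f.trans (LinearEquiv.smulOfNeZero K B c hc0), hA, hB,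
    isStrongMatching_of_disjoint_mul hAB _, isStrongMatching_of_disjoint_mul hAB _,
    (f.trans_smulOfNeZero_ne_self hc0 hc1).symm,
    equivStrongMatchings_trans_smulOfNeZero f hc0 hcd⟩

variable (K) in
def powSpan (x : L) (s : Set ℕ) : Submodule K L :=
  Submodule.span K ((x ^ ·) '' s)

theorem powSpan_mul_powSpan_le (x : L) (s t : Set ℕ) :
    powSpan K x s * powSpan K x t ≤ powSpan K x (s + t) := by
  rw [powSpan, powSpan, Submodule.span_mul_span]
  refine Submodule.span_mono ?_
  rintro _ ⟨_, ⟨i, hi, rfl⟩, _, ⟨j, hj, rfl⟩, rfl⟩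
  exact ⟨i + j, Set.add_mem_add hi hj, pow_add x i j⟩

theorem disjoint_powSpan {x : L} {s t : Set ℕ} (hx : LinearIndepOn K (x ^ ·) (s ∪ t))
    (hst : Disjoint s t) : Disjoint (powSpan K x s) (powSpan K x t) :=
  ((linearIndepOn_union_iff hst).mp hx).2.2

theorem finrank_powSpan {x : L} {s : Set ℕ} (hs : s.Finite) (hx : LinearIndepOn K (x ^ ·) s) :
    finrank K (powSpan K x s) = s.ncard := by
  have := hs.fintype
  rw [powSpan, Set.image_eq_range, finrank_span_eq_card hx, ← Nat.card_eq_fintype_card,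
    Nat.card_coe_set_eq]

theorem failsLinearAcyclicAt_of_linearIndepOn_pow (hK : 4 ≤ Cardinal.mk K) {x : L} {N m : ℕ}
    (hx : LinearIndepOn K (x ^ ·) (Iio N)) (hm : m ≠ 0) (hmN : 3 * m ≤ N + 1) :
    FailsLinearAcyclicAt K L m := by
  have hsums : Iio m + Ico m (2 * m) ⊆ Ico m N := by
    rintro _ ⟨i, hi, j, hj, rfl⟩
    simp only [mem_Iio, mem_Ico] at hi hj ⊢
    omega
  have hdisj : Disjoint (powSpan K x (Iio m)) (powSpan K x (Ico m N)) :=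
    disjoint_powSpan (hx.mono (union_subset (Iio_subset_Iio (by omega)) Ico_subset_Iio_self))
      (Iio_disjoint_Ici le_rfl |>.mono_right Ico_subset_Ici_self)
  have hmul : powSpan K x (Iio m) * powSpan K x (Ico m (2 * m)) ≤ powSpan K x (Ico m N) :=
    (powSpan_mul_powSpan_le x _ _).trans (Submodule.span_mono (image_mono hsums))
  refine failsLinearAcyclicAt_of_disjoint_mul hK hm ?_ ?_ (hdisj.mono_right hmul)
  · rw [finrank_powSpan (finite_Iio m) (hx.mono (Iio_subset_Iio (by omega))), ncard_Iio_nat]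
  · rw [finrank_powSpan (finite_Ico m _)
      (hx.mono (Ico_subset_Iio_self.trans (Iio_subset_Iio (by omega)))), ncard_Ico_nat]
    omega

theorem exists_adjoin_simple_eq_top_of_forall_eq_bot_or_eq_top (hL : 1 < finrank K L)
    (h : ∀ M : IntermediateField K L, M = ⊥ ∨ M = ⊤) : ∃ x : L, K⟮x⟯ = ⊤ := by
  obtain ⟨x, hx⟩ : ∃ x : L, x ∉ (⊥ : IntermediateField K L) := by
    by_contra! hbot
    exact hL.ne' (bot_eq_top_iff_finrank_eq_one.mp (eq_top_iff.mpr fun y _ => hbot y))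
  exact ⟨x, (h K⟮x⟯).resolve_left (mt adjoin_simple_eq_bot_iff.mp hx)⟩

theorem linearIndepOn_pow_Iio_finrank_of_adjoin_simple_eq_top [FiniteDimensional K L] {x : L}
    (hx : K⟮x⟯ = ⊤) : LinearIndepOn K (x ^ ·) (Iio (finrank K L)) := by
  have hdeg := (Field.primitive_element_iff_minpoly_natDegree_eq K x).mp hx
  exact (linearIndependent_equiv' Fin.equivSubtype rfl).mp (hdeg ▸ linearIndependent_pow x)

end

/-- Let `K ⊊ L` be a finite extension of degree `n` with `#K ≥ 5` and no proper
intermediate field. Then for every `m` with `1 ≤ m ≤ (n+1)/4`, the extension fails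
to have the linear acyclic matching property at order `m`. -/
theorem stmt15 (K L : Type*) [Field K] [Field L] [Algebra K L]
    [FiniteDimensional K L] (n : ℕ) (hn : Module.finrank K L = n)
    (hproper : 1 < n) (hK : 5 ≤ Cardinal.mk K)
    (hnomid : ∀ M : IntermediateField K L, M = ⊥ ∨ M = ⊤) :
    ∀ m : ℕ, 1 ≤ m → m ≤ (n + 1) / 4 → FailsLinearAcyclicAt K L m := by
  intro m hm1 hm4
  obtain ⟨x, hx⟩ := exists_adjoin_simple_eq_top_of_forall_eq_bot_or_eq_top (hn ▸ hproper) hnomid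
  refine failsLinearAcyclicAt_of_linearIndepOn_pow (le_trans (by norm_num) hK)
    (linearIndepOn_pow_Iio_finrank_of_adjoin_simple_eq_top hx) (by omega) ?_
  omega
end

section
/- Let K ⊆ L be a field extension and let a ∈ L be algebraic over K of degree n. If m is a natural number with 1 ≤ m ≤ (n+1)/4 and A = span_K{a, a³, …, a^{2m−1}}, then (A·A) ∩ A = {0}, where A·A denotes the K-subspace of L spanned by all products x·y with x, y ∈ A. -/
open Submodule Pointwise

section
variable {K L : Type*} [Field K] [Field L] [Algebra K L]

theorem span_pow_image_mul_span_pow_image (a : L) (S T : Set ℕ) :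
    span K ((a ^ ·) '' S) * span K ((a ^ ·) '' T) = span K ((a ^ ·) '' (S + T)) := by
  rw [span_mul_span, ← Set.image2_mul, Set.image2_image_left, Set.image2_image_right,
    ← Set.image2_add, Set.image_image2]
  simp only [pow_add]

theorem disjoint_span_pow_image (a : L) {S T : Set ℕ}
    (hS : ∀ k ∈ S, k < (minpoly K a).natDegree) (hT : ∀ k ∈ T, k < (minpoly K a).natDegree)
    (hST : Disjoint S T) :
    Disjoint (span K ((a ^ ·) '' S)) (span K ((a ^ ·) '' T)) := by
  have image_eq : ∀ U : Set ℕ, (∀ k ∈ U, k < (minpoly K a).natDegree) →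
      (a ^ ·) '' U = (fun i : Fin (minpoly K a).natDegree => a ^ (i : ℕ)) '' (Fin.val ⁻¹' U) := by
    intro U hU
    rw [← Set.image_image (a ^ ·) Fin.val, Set.image_preimage_eq_of_subset]
    intro k hk
    exact ⟨⟨k, hU k hk⟩, rfl⟩
  rw [image_eq S hS, image_eq T hT]
  exact (linearIndependent_pow a).disjoint_span_image (hST.preimage _)

end

theorem stmt16_general (K L : Type*) [Field K] [Field L] [Algebra K L]
    (a : L) (n : ℕ) (hn : (minpoly K a).natDegree = n)
    (m : ℕ) (hm2 : m ≤ (n + 1) / 4)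
    (A : Submodule K L)
    (hA : A = Submodule.span K (Set.range fun i : Fin m => a ^ (2 * (i : ℕ) + 1))) :
    (A * A) ⊓ A = ⊥ := by
  subst hn
  set S : Set ℕ := Set.range fun i : Fin m => 2 * (i : ℕ) + 1
  have hA' : A = span K ((a ^ ·) '' S) := by rw [hA, ← Set.range_comp]; rfl
  have hS : ∀ k ∈ S, k < (minpoly K a).natDegree := by
    rintro _ ⟨i, rfl⟩
    dsimp only
    omega
  have hSS : ∀ k ∈ S + S, k < (minpoly K a).natDegree := by
    rintro _ ⟨_, ⟨i, rfl⟩, _, ⟨j, rfl⟩, rfl⟩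
    dsimp only
    omega
  have parity : Disjoint (S + S) S := by
    rw [Set.disjoint_left]
    rintro _ ⟨_, ⟨i, rfl⟩, _, ⟨j, rfl⟩, rfl⟩ ⟨k, hk⟩
    dsimp only at hk
    omega
  rw [hA', span_pow_image_mul_span_pow_image, ← disjoint_iff]
  exact disjoint_span_pow_image a hSS hS parity

/-- If `a ∈ L` is algebraic over `K` of degree `n` and `1 ≤ m ≤ (n+1)/4`, then the
subspace `A = span{a, a³, …, a^(2m-1)}` satisfies `(A·A) ⊓ A = 0`. -/
theorem stmt16 (K L : Type*) [Field K] [Field L] [Algebra K L]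
    (a : L) (ha : IsIntegral K a) (n : ℕ) (hn : (minpoly K a).natDegree = n)
    (m : ℕ) (hm1 : 1 ≤ m) (hm2 : m ≤ (n + 1) / 4)
    (A : Submodule K L)
    (hA : A = Submodule.span K (Set.range fun i : Fin m => a ^ (2 * (i : ℕ) + 1))) :
    (A * A) ⊓ A = ⊥ :=
  stmt16_general K L a n hn m hm2 A hA
end
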